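/- arXiv:2001.02298 — 8 statements merged into one kernel-verified Lean document; each statement's English description precedes it below -/
import Mathlib

section
/- Let V = uT + vN + wB be a unit vector field along γ (u² + v² + w² = 1) and let β(s) = ∫V(s)ds + λ(s)N(s) for a smooth function λ. Suppose β is regular and admits a Frenet frame {T̄, N̄, B̄} whose principal normal satisfies N̄ = εN with ε = ±1, and suppose ⟨T(s), T̄(s)⟩ ≠ 0 for all s, writing ⟨T, T̄⟩ = cos θ(s). Then λ′(s) = −v(s) for all s (i.e. λ(s) = −∫v(s)ds up to constant), the angle θ is constant, and λ(κ tan θ + τ) = u tan θ − w holds identically on I. -/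
open scoped RealInnerProductSpace

noncomputable def cross3 (x y : EuclideanSpace ℝ (Fin 3)) : EuclideanSpace ℝ (Fin 3) :=
  WithLp.toLp 2 ![x 1 * y 2 - x 2 * y 1, x 2 * y 0 - x 0 * y 2, x 0 * y 1 - x 1 * y 0]

/-!
Differentiating `β = ∫V + λN` in the Frenet frame gives
`σ T̄ = β' = (u - λκ) T + (v + λ') N + (w + λτ) B`. As `T̄` is a unit field, `T̄ ⊥ T̄' ∥ N̄ = ±N`,
so the `N`-coordinate vanishes: `λ' = -v`. Moreover `⟪T, T̄⟫` and `⟪B, T̄⟫` have zero derivative,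
because `T'`, `B'` are parallel to `N ⊥ T̄` and `T̄'` is parallel to `N ⊥ T, B`; hence
`T̄ = cos θ T + sin θ B` for a constant `θ`. Comparing the `T`- and `B`-coordinates of `β'` and
eliminating `σ` gives `λ (κ tan θ + τ) = u tan θ - w`.
-/

open Filter Topology

theorem Real.exists_cos_eq_sin_eq {c d : ℝ} (h : c ^ 2 + d ^ 2 = 1) :
    ∃ θ : ℝ, Real.cos θ = c ∧ Real.sin θ = d := by
  have hnorm : ‖(⟨c, d⟩ : ℂ)‖ = 1 := by
    rw [Complex.norm_def, Complex.normSq_mk, ← sq, ← sq, h, Real.sqrt_one]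
  refine ⟨Complex.arg ⟨c, d⟩, ?_, ?_⟩
  · simpa [hnorm] using Complex.norm_mul_cos_arg ⟨c, d⟩
  · simpa [hnorm] using Complex.norm_mul_sin_arg ⟨c, d⟩

theorem Real.mul_add_eq_mul_tan_sub {θ σ lam κ τ u w : ℝ} (hcos : Real.cos θ ≠ 0)
    (hT : σ * Real.cos θ = u - lam * κ) (hB : σ * Real.sin θ = w + lam * τ) :
    lam * (κ * Real.tan θ + τ) = u * Real.tan θ - w := by
  rw [Real.tan_eq_sin_div_cos]
  field_simp
  linear_combination Real.sin θ * hT - Real.cos θ * hB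

section InnerProductSpace

variable {E : Type*} [NormedAddCommGroup E] [InnerProductSpace ℝ E]

theorem inner_eq_zero_iff_of_eq_or_eq_neg {x y z : E} (h : y = z ∨ y = -z) :
    ⟪x, y⟫ = 0 ↔ ⟪x, z⟫ = 0 := by
  rcases h with rfl | rfl <;> simp

theorem Orthonormal.inner_smul_add_smul_add_smul {e₀ e₁ e₂ : E}
    (he : Orthonormal ℝ ![e₀, e₁, e₂]) (x₀ x₁ x₂ : ℝ) :
    ⟪e₀, x₀ • e₀ + x₁ • e₁ + x₂ • e₂⟫ = x₀ ∧ ⟪e₁, x₀ • e₀ + x₁ • e₁ + x₂ • e₂⟫ = x₁ ∧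
      ⟪e₂, x₀ • e₀ + x₁ • e₁ + x₂ • e₂⟫ = x₂ := by
  have hcoord (i : Fin 3) := he.inner_right_fintype ![x₀, x₁, x₂] i
  simp only [Fin.sum_univ_three] at hcoord
  exact ⟨hcoord 0, hcoord 1, hcoord 2⟩

theorem Orthonormal.sum_sq_inner_eq_norm_sq [FiniteDimensional ℝ E] {ι : Type*} [Fintype ι]
    {v : ι → E} (hv : Orthonormal ℝ v) (hcard : Fintype.card ι = Module.finrank ℝ E) (x : E) :
    ∑ i, ⟪v i, x⟫ ^ 2 = ‖x‖ ^ 2 := by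
  have hspan := hv.linearIndependent.span_eq_top_of_card_eq_finrank' hcard
  simpa using (OrthonormalBasis.mk hv hspan.ge).sum_sq_inner_right x

theorem HasDerivAt.inner_eq_zero_of_eventually_norm_eq {f : ℝ → E} {f' : E} {s r : ℝ}
    (hf : HasDerivAt f f' s) (hr : ∀ᶠ t in 𝓝 s, ‖f t‖ = r) : ⟪f s, f'⟫ = 0 := by
  have hsq : HasDerivAt (‖f ·‖ ^ 2) 0 s :=
    (hasDerivAt_const s (r ^ 2)).congr_of_eventuallyEq (hr.mono fun t ht => by simp only [ht])
  simpa using hsq.unique hf.norm_sq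

theorem IsOpen.inner_eq_of_hasDerivAt_smul_orthogonal {U : Set ℝ} (hU : IsOpen U)
    (hU' : IsPreconnected U) {f g n m : ℝ → E} {k l : ℝ → ℝ}
    (hf : ∀ t ∈ U, HasDerivAt f (k t • n t) t) (hg : ∀ t ∈ U, HasDerivAt g (l t • m t) t)
    (hfm : ∀ t ∈ U, ⟪f t, m t⟫ = 0) (hng : ∀ t ∈ U, ⟪n t, g t⟫ = 0)
    {x y : ℝ} (hx : x ∈ U) (hy : y ∈ U) : ⟪f x, g x⟫ = ⟪f y, g y⟫ := by
  have hderiv (t : ℝ) (ht : t ∈ U) : HasDerivAt (fun t => ⟪f t, g t⟫) 0 t := by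
    simpa [real_inner_smul_left, real_inner_smul_right, hfm t ht, hng t ht] using
      (hf t ht).inner ℝ (hg t ht)
  exact hU.is_const_of_deriv_eq_zero hU'
    (fun t ht => (hderiv t ht).differentiableAt.differentiableWithinAt)
    (fun t ht => (hderiv t ht).deriv) hx hy

theorem HasDerivAt.add_smul_of_frenet {V N : ℝ → E} {lam : ℝ → ℝ} {T B : E}
    {u v w κ τ l s : ℝ} (hV : HasDerivAt V (u • T + v • N s + w • B) s)
    (hlam : HasDerivAt lam l s) (hN : HasDerivAt N ((-κ) • T + τ • B) s) :
    HasDerivAt (fun t => V t + lam t • N t)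
      ((u - lam s * κ) • T + (v + l) • N s + (w + lam s * τ) • B) s := by
  refine (hV.add (hlam.smul hN)).congr_deriv ?_
  module

theorem exists_inner_eq_cos_sin_of_frenet [FiniteDimensional ℝ E]
    (hdim : Module.finrank ℝ E = 3) {U : Set ℝ} (hU : IsOpen U) (hU' : IsPreconnected U)
    {T N B Tb Nb : ℝ → E} {κ τ k : ℝ → ℝ} (hframe : ∀ s ∈ U, Orthonormal ℝ ![T s, N s, B s])
    (hTder : ∀ s ∈ U, HasDerivAt T (κ s • N s) s) (hBder : ∀ s ∈ U, HasDerivAt B (τ s • N s) s)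
    (hTb1 : ∀ s ∈ U, ‖Tb s‖ = 1) (hTbder : ∀ s ∈ U, HasDerivAt Tb (k s • Nb s) s)
    (hNbN : ∀ s ∈ U, Nb s = N s ∨ Nb s = -N s) (hNTb : ∀ s ∈ U, ⟪N s, Tb s⟫ = 0) :
    ∃ θ : ℝ, ∀ s ∈ U, ⟪T s, Tb s⟫ = Real.cos θ ∧ ⟪B s, Tb s⟫ = Real.sin θ := by
  rcases U.eq_empty_or_nonempty with rfl | ⟨s₀, hs₀⟩
  · exact ⟨0, by simp⟩
  have hTNb (s) (hs : s ∈ U) : ⟪T s, Nb s⟫ = 0 := by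
    rw [inner_eq_zero_iff_of_eq_or_eq_neg (hNbN s hs)]
    simpa using (hframe s hs).inner_eq_zero (show (0 : Fin 3) ≠ 1 by decide)
  have hBNb (s) (hs : s ∈ U) : ⟪B s, Nb s⟫ = 0 := by
    rw [inner_eq_zero_iff_of_eq_or_eq_neg (hNbN s hs)]
    simpa using (hframe s hs).inner_eq_zero (show (2 : Fin 3) ≠ 1 by decide)
  have hunit : ⟪T s₀, Tb s₀⟫ ^ 2 + ⟪B s₀, Tb s₀⟫ ^ 2 = 1 := by
    simpa [Fin.sum_univ_three, hNTb s₀ hs₀, hTb1 s₀ hs₀] using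
      (hframe s₀ hs₀).sum_sq_inner_eq_norm_sq (by simp [hdim]) (Tb s₀)
  obtain ⟨θ, hcos, hsin⟩ := Real.exists_cos_eq_sin_eq hunit
  refine ⟨θ, fun s hs => ⟨?_, ?_⟩⟩
  · rw [hcos]
    exact hU.inner_eq_of_hasDerivAt_smul_orthogonal hU' hTder hTbder hTNb hNTb hs hs₀
  · rw [hsin]
    exact hU.inner_eq_of_hasDerivAt_smul_orthogonal hU' hBder hTbder hBNb hNTb hs hs₀

end InnerProductSpace

theorem stmt_0_general (a b : ℝ) (T N B : ℝ → EuclideanSpace ℝ (Fin 3)) (κ τ : ℝ → ℝ)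
    (hT1 : ∀ s ∈ Set.Ioo a b, ‖T s‖ = 1)
    (hN1 : ∀ s ∈ Set.Ioo a b, ‖N s‖ = 1)
    (hB1 : ∀ s ∈ Set.Ioo a b, ‖B s‖ = 1)
    (hTN : ∀ s ∈ Set.Ioo a b, ⟪T s, N s⟫ = 0)
    (hTB : ∀ s ∈ Set.Ioo a b, ⟪T s, B s⟫ = 0)
    (hNB : ∀ s ∈ Set.Ioo a b, ⟪N s, B s⟫ = 0)
    (hTder : ∀ s ∈ Set.Ioo a b, HasDerivAt T (κ s • N s) s)
    (hNder : ∀ s ∈ Set.Ioo a b, HasDerivAt N ((-κ s) • T s + τ s • B s) s)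
    (hBder : ∀ s ∈ Set.Ioo a b, HasDerivAt B ((-τ s) • N s) s)
    (u v w lam lamd σ κb : ℝ → ℝ)
    (Vint β Tb Nb : ℝ → EuclideanSpace ℝ (Fin 3))
    (hlam : ∀ s ∈ Set.Ioo a b, HasDerivAt lam (lamd s) s)
    (hVint : ∀ s ∈ Set.Ioo a b, HasDerivAt Vint (u s • T s + v s • N s + w s • B s) s)
    (hβ : ∀ s, β s = Vint s + lam s • N s)
    (hβreg : ∀ s ∈ Set.Ioo a b, HasDerivAt β (σ s • Tb s) s)
    (hσpos : ∀ s ∈ Set.Ioo a b, 0 < σ s)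
    (hTb1 : ∀ s ∈ Set.Ioo a b, ‖Tb s‖ = 1)
    (hTbder : ∀ s ∈ Set.Ioo a b, HasDerivAt Tb ((σ s * κb s) • Nb s) s)
    (hκbpos : ∀ s ∈ Set.Ioo a b, 0 < κb s)
    (hNbN : ∀ s ∈ Set.Ioo a b, Nb s = N s ∨ Nb s = -N s)
    (hangle : ∀ s ∈ Set.Ioo a b, ⟪T s, Tb s⟫ ≠ 0) :
    (∀ s ∈ Set.Ioo a b, lamd s = -v s) ∧
    ∃ θ : ℝ, ∀ s ∈ Set.Ioo a b,
      ⟪T s, Tb s⟫ = Real.cos θ ∧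
      lam s * (κ s * Real.tan θ + τ s) = u s * Real.tan θ - w s := by
  have hframe (s) (hs : s ∈ Set.Ioo a b) : Orthonormal ℝ ![T s, N s, B s] := by
    simp [Fin.forall_fin_two, hT1 s hs, hN1 s hs, hB1 s hs, hTN s hs, hTB s hs, hNB s hs]
  have hNTb (s) (hs : s ∈ Set.Ioo a b) : ⟪N s, Tb s⟫ = 0 := by
    have hTbNb := (hTbder s hs).inner_eq_zero_of_eventually_norm_eq
      (eventually_of_mem (Ioo_mem_nhds hs.1 hs.2) hTb1)
    rw [real_inner_smul_right, mul_eq_zero, or_iff_right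
      (mul_pos (hσpos s hs) (hκbpos s hs)).ne', inner_eq_zero_iff_of_eq_or_eq_neg (hNbN s hs),
      real_inner_comm] at hTbNb
    exact hTbNb
  have hcoord (s) (hs : s ∈ Set.Ioo a b) : σ s * ⟪T s, Tb s⟫ = u s - lam s * κ s ∧
      σ s * ⟪N s, Tb s⟫ = v s + lamd s ∧ σ s * ⟪B s, Tb s⟫ = w s + lam s * τ s := by
    have hβ' := (hVint s hs).add_smul_of_frenet (hlam s hs) (hNder s hs)
    rw [← funext hβ] at hβ'
    simp only [← real_inner_smul_right, (hβreg s hs).unique hβ']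
    exact (hframe s hs).inner_smul_add_smul_add_smul _ _ _
  refine ⟨fun s hs => ?_, ?_⟩
  · have hN := (hcoord s hs).2.1
    rw [hNTb s hs, mul_zero] at hN
    linarith
  obtain ⟨θ, hθ⟩ := exists_inner_eq_cos_sin_of_frenet (by simp) isOpen_Ioo
    isPreconnected_Ioo hframe hTder hBder hTb1 hTbder hNbN hNTb
  refine ⟨θ, fun s hs => ⟨(hθ s hs).1, ?_⟩⟩
  obtain ⟨hcos, hsin⟩ := hθ s hs
  obtain ⟨hT, -, hB⟩ := hcoord s hs
  exact Real.mul_add_eq_mul_tan_sub (hcos ▸ hangle s hs) (hcos ▸ hT) (hsin ▸ hB)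

/-- If β(s) = ∫V ds + λ(s)N(s) with V = uT+vN+wB unit, β regular with
Frenet principal normal N̄ = ±N, and ⟪T, T̄⟫ ≠ 0 (written cos θ), then λ' = -v,
the angle θ is constant, and λ(κ tan θ + τ) = u tan θ - w identically. -/
theorem stmt_0 (a b : ℝ) (γ T N B : ℝ → EuclideanSpace ℝ (Fin 3)) (κ τ : ℝ → ℝ)
    (hγT : ∀ s ∈ Set.Ioo a b, HasDerivAt γ (T s) s)
    (hT1 : ∀ s ∈ Set.Ioo a b, ‖T s‖ = 1)
    (hN1 : ∀ s ∈ Set.Ioo a b, ‖N s‖ = 1)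
    (hB1 : ∀ s ∈ Set.Ioo a b, ‖B s‖ = 1)
    (hTN : ∀ s ∈ Set.Ioo a b, ⟪T s, N s⟫ = 0)
    (hTB : ∀ s ∈ Set.Ioo a b, ⟪T s, B s⟫ = 0)
    (hNB : ∀ s ∈ Set.Ioo a b, ⟪N s, B s⟫ = 0)
    (horient : ∀ s ∈ Set.Ioo a b, B s = cross3 (T s) (N s))
    (hκpos : ∀ s ∈ Set.Ioo a b, 0 < κ s)
    (hTder : ∀ s ∈ Set.Ioo a b, HasDerivAt T (κ s • N s) s)
    (hNder : ∀ s ∈ Set.Ioo a b, HasDerivAt N ((-κ s) • T s + τ s • B s) s)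
    (hBder : ∀ s ∈ Set.Ioo a b, HasDerivAt B ((-τ s) • N s) s)
    (u v w lam lamd σ κb : ℝ → ℝ)
    (Vint β Tb Nb : ℝ → EuclideanSpace ℝ (Fin 3))
    (huvw : ∀ s ∈ Set.Ioo a b, u s ^ 2 + v s ^ 2 + w s ^ 2 = 1)
    (hlam : ∀ s ∈ Set.Ioo a b, HasDerivAt lam (lamd s) s)
    (hVint : ∀ s ∈ Set.Ioo a b, HasDerivAt Vint (u s • T s + v s • N s + w s • B s) s)
    (hβ : ∀ s, β s = Vint s + lam s • N s)
    (hβreg : ∀ s ∈ Set.Ioo a b, HasDerivAt β (σ s • Tb s) s)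
    (hσpos : ∀ s ∈ Set.Ioo a b, 0 < σ s)
    (hTb1 : ∀ s ∈ Set.Ioo a b, ‖Tb s‖ = 1)
    (hTbder : ∀ s ∈ Set.Ioo a b, HasDerivAt Tb ((σ s * κb s) • Nb s) s)
    (hκbpos : ∀ s ∈ Set.Ioo a b, 0 < κb s)
    (hNb1 : ∀ s ∈ Set.Ioo a b, ‖Nb s‖ = 1)
    (hNbN : ∀ s ∈ Set.Ioo a b, Nb s = N s ∨ Nb s = -N s)
    (hangle : ∀ s ∈ Set.Ioo a b, ⟪T s, Tb s⟫ ≠ 0) :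
    (∀ s ∈ Set.Ioo a b, lamd s = -v s) ∧
    ∃ θ : ℝ, ∀ s ∈ Set.Ioo a b,
      ⟪T s, Tb s⟫ = Real.cos θ ∧
      lam s * (κ s * Real.tan θ + τ s) = u s * Real.tan θ - w s :=
  stmt_0_general a b T N B κ τ hT1 hN1 hB1 hTN hTB hNB hTder hNder hBder u v w lam lamd σ κb Vint β
    Tb Nb hlam hVint hβ hβreg hσpos hTb1 hTbder hκbpos hNbN hangle
end

section
/- Suppose γ is an anti-Salkowski-type curve: τ(s) = c for a nonzero constant c and κ is not constant on I. Then there exist constants λ and μ ≠ 0 with λκ(s) + μτ(s) = −1 for all s (so γ is a B-Bertrand curve), but there exist NO constants λ ≠ 0 and μ such that λκ(s) + μτ(s) = 1 for all s (so γ is not a Bertrand curve). -/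
open scoped RealInnerProductSpace

section LinearRelation

variable {α 𝕜 : Type*} [Field 𝕜] {S : Set α} {κ τ : α → 𝕜} {c : 𝕜}

theorem exists_linear_relation_eq_neg_one_of_eq_const (hc : c ≠ 0) (hτ : ∀ s ∈ S, τ s = c) :
    ∃ lam μ : 𝕜, μ ≠ 0 ∧ ∀ s ∈ S, lam * κ s + μ * τ s = -1 :=
  ⟨0, -c⁻¹, neg_ne_zero.mpr (inv_ne_zero hc), fun s hs => by
    rw [hτ s hs, zero_mul, zero_add, neg_mul, inv_mul_cancel₀ hc]⟩

theorem eq_const_of_linear_relation {lam μ d : 𝕜} (hlam : lam ≠ 0)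
    (h : ∀ s ∈ S, lam * κ s + μ * τ s = d) (hτ : ∀ s ∈ S, τ s = c) :
    ∀ s ∈ S, κ s = (d - μ * c) / lam := fun s hs => by
  rw [eq_div_iff hlam, ← h s hs, hτ s hs]
  ring

end LinearRelation

theorem stmt_5_general (a b : ℝ) (κ τ : ℝ → ℝ)
    (c : ℝ) (hc : c ≠ 0)
    (hτconst : ∀ s ∈ Set.Ioo a b, τ s = c)
    (hκnonconst : ¬ ∃ d : ℝ, ∀ s ∈ Set.Ioo a b, κ s = d) :
    (∃ lam μ : ℝ, μ ≠ 0 ∧ ∀ s ∈ Set.Ioo a b, lam * κ s + μ * τ s = -1) ∧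
    ¬ ∃ lam μ : ℝ, lam ≠ 0 ∧ ∀ s ∈ Set.Ioo a b, lam * κ s + μ * τ s = 1 :=
  ⟨exists_linear_relation_eq_neg_one_of_eq_const hc hτconst,
    fun ⟨_, _, hlam, h⟩ => hκnonconst ⟨_, eq_const_of_linear_relation hlam h hτconst⟩⟩

/-- An anti-Salkowski-type curve (τ = c ≠ 0 constant, κ nonconstant) is a
B-Bertrand curve (∃ λ, μ ≠ 0 with λκ + μτ = -1) but not a Bertrand curve
(no λ ≠ 0, μ with λκ + μτ = 1). -/
theorem stmt_5 (a b : ℝ) (γ T N B : ℝ → EuclideanSpace ℝ (Fin 3)) (κ τ : ℝ → ℝ)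
    (hγT : ∀ s ∈ Set.Ioo a b, HasDerivAt γ (T s) s)
    (hT1 : ∀ s ∈ Set.Ioo a b, ‖T s‖ = 1)
    (hN1 : ∀ s ∈ Set.Ioo a b, ‖N s‖ = 1)
    (hB1 : ∀ s ∈ Set.Ioo a b, ‖B s‖ = 1)
    (hTN : ∀ s ∈ Set.Ioo a b, ⟪T s, N s⟫ = 0)
    (hTB : ∀ s ∈ Set.Ioo a b, ⟪T s, B s⟫ = 0)
    (hNB : ∀ s ∈ Set.Ioo a b, ⟪N s, B s⟫ = 0)
    (horient : ∀ s ∈ Set.Ioo a b, B s = cross3 (T s) (N s))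
    (hκpos : ∀ s ∈ Set.Ioo a b, 0 < κ s)
    (hTder : ∀ s ∈ Set.Ioo a b, HasDerivAt T (κ s • N s) s)
    (hNder : ∀ s ∈ Set.Ioo a b, HasDerivAt N ((-κ s) • T s + τ s • B s) s)
    (hBder : ∀ s ∈ Set.Ioo a b, HasDerivAt B ((-τ s) • N s) s)
    (c : ℝ) (hc : c ≠ 0)
    (hτconst : ∀ s ∈ Set.Ioo a b, τ s = c)
    (hκnonconst : ¬ ∃ d : ℝ, ∀ s ∈ Set.Ioo a b, κ s = d) :
    (∃ lam μ : ℝ, μ ≠ 0 ∧ ∀ s ∈ Set.Ioo a b, lam * κ s + μ * τ s = -1) ∧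
    ¬ ∃ lam μ : ℝ, lam ≠ 0 ∧ ∀ s ∈ Set.Ioo a b, lam * κ s + μ * τ s = 1 :=
  stmt_5_general a b κ τ c hc hτconst hκnonconst
end

section
/- The curve γ is an N-Bertrand curve if and only if γ is a general helix. Precisely: there exist a smooth function λ : I → ℝ and a constant θ with cos θ ≠ 0 such that the curve β(s) = ∫N(s)ds + λ(s)N(s) is regular and has principal normal N̄ = εN (ε = ±1) with ⟨T, T̄⟩ = cos θ, if and only if the ratio τ/κ is constant on I; in that case λ(s) = c − s for some constant c and τ/κ = −tan θ. -/
/-!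
Write `β = ∫N + λN`. Then `β' = -λκ T + (1 + λ') N + λτ B`. Differentiating the constant
`⟪T, T̄⟫ = cos θ` gives `κ ⟪N, T̄⟫ = 0`, because `T̄' ∥ N̄ = ±N ⊥ T`; so `β' ∥ T̄` has no
`N`-component, i.e. `λ' = -1`, and its `T`- and `B`-components `σ cos θ = -λκ`, `σ sin θ = λτ`
give `τ/κ = -tan θ`. Conversely, if `τ = -tan θ · κ` with `cos θ > 0`, then for `λ(s) = a - s`
the derivative `β' = (s - a)(κ T - τ B)` is a positive multiple of `T̄ = cos θ T + sin θ B`, and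
`T̄' = (κ / cos θ) N`.
-/

open scoped RealInnerProductSpace

open Set Real

variable {E : Type*} [NormedAddCommGroup E] [InnerProductSpace ℝ E]

structure IsFrenetFrameOn (a b : ℝ) (T N B : ℝ → E) (κ τ : ℝ → ℝ) : Prop where
  norm_tangent : ∀ s ∈ Ioo a b, ‖T s‖ = 1
  norm_normal : ∀ s ∈ Ioo a b, ‖N s‖ = 1
  norm_binormal : ∀ s ∈ Ioo a b, ‖B s‖ = 1
  inner_tangent_normal : ∀ s ∈ Ioo a b, ⟪T s, N s⟫ = 0
  inner_tangent_binormal : ∀ s ∈ Ioo a b, ⟪T s, B s⟫ = 0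
  inner_normal_binormal : ∀ s ∈ Ioo a b, ⟪N s, B s⟫ = 0
  curvature_pos : ∀ s ∈ Ioo a b, 0 < κ s
  hasDerivAt_tangent : ∀ s ∈ Ioo a b, HasDerivAt T (κ s • N s) s
  hasDerivAt_normal : ∀ s ∈ Ioo a b, HasDerivAt N ((-κ s) • T s + τ s • B s) s
  hasDerivAt_binormal : ∀ s ∈ Ioo a b, HasDerivAt B ((-τ s) • N s) s

/-- The paper's `β = ∫N + λN`, with `Nint = ∫N`, `lam = λ`, `lamd = λ'`; `σ = ‖β'‖`, and `Tb`, `κb`,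
`Nb` are the unit tangent, the curvature and the principal normal of `β`. -/
def IsNBertrandMateOn (a b : ℝ) (T N B : ℝ → E) (lam lamd σ κb : ℝ → ℝ)
    (Nint β Tb Nb : ℝ → E) (θ : ℝ) : Prop :=
  cos θ ≠ 0 ∧
    (∀ s ∈ Ioo a b, HasDerivAt lam (lamd s) s) ∧
    (∀ s ∈ Ioo a b, HasDerivAt Nint (N s) s) ∧
    (∀ s, β s = Nint s + lam s • N s) ∧
    (∀ s ∈ Ioo a b, HasDerivAt β (σ s • Tb s) s) ∧
    (∀ s ∈ Ioo a b, 0 < σ s) ∧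
    (∀ s ∈ Ioo a b, ‖Tb s‖ = 1) ∧
    (∀ s ∈ Ioo a b, HasDerivAt Tb ((σ s * κb s) • Nb s) s) ∧
    (∀ s ∈ Ioo a b, 0 < κb s) ∧
    (∀ s ∈ Ioo a b, ‖Nb s‖ = 1) ∧
    (∀ s ∈ Ioo a b, Nb s = N s ∨ Nb s = -N s) ∧
    (∀ s ∈ Ioo a b, ⟪T s, Tb s⟫ = cos θ) ∧
    (∀ s ∈ Ioo a b, ⟪B s, Tb s⟫ = sin θ)

lemma exists_eq_const_sub_of_hasDerivAt_neg_one {a b : ℝ} {f : ℝ → ℝ}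
    (hf : ∀ s ∈ Ioo a b, HasDerivAt f (-1) s) : ∃ c, ∀ s ∈ Ioo a b, f s = c - s := by
  obtain ⟨c, hc⟩ := isOpen_Ioo.exists_eq_add_of_deriv_eq isPreconnected_Ioo
    (fun s hs => (hf s hs).differentiableAt.differentiableWithinAt)
    (differentiable_neg.differentiableOn) (fun s hs => by simp [(hf s hs).deriv])
  exact ⟨c, fun s hs => by rw [hc hs]; ring⟩

lemma exists_hasDerivAt_eq_on_Ioo [CompleteSpace E] {a b : ℝ} {f : ℝ → E}
    (hf : ContinuousOn f (Ioo a b)) : ∃ F : ℝ → E, ∀ s ∈ Ioo a b, HasDerivAt F (f s) s := by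
  rcases (Ioo a b).eq_empty_or_nonempty with h | ⟨c, hc⟩
  · exact ⟨0, by simp [h]⟩
  refine ⟨fun x => ∫ t in c..x, f t, fun s hs => ?_⟩
  have hfs : ∀ t ∈ Ioo a b, ContinuousAt f t := fun t ht => hf.continuousAt (isOpen_Ioo.mem_nhds ht)
  exact intervalIntegral.integral_hasDerivAt_right
    ((hf.mono (ordConnected_Ioo.uIcc_subset hc hs)).intervalIntegrable)
    (ContinuousAt.stronglyMeasurableAtFilter isOpen_Ioo hfs s hs) (hfs s hs)

lemma div_eq_neg_tan_of_mul_cos_of_mul_sin {σ l κ τ θ : ℝ} (hσ : σ ≠ 0) (hcos : cos θ ≠ 0)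
    (hκ : κ ≠ 0) (hT : σ * cos θ = -(l * κ)) (hB : σ * sin θ = l * τ) : τ / κ = -tan θ := by
  have hl : l ≠ 0 := by rintro rfl; simp_all
  rw [tan_eq_sin_div_cos, ← neg_div, div_eq_div_iff hκ hcos]
  apply mul_left_cancel₀ hl
  linear_combination sin θ * hT - cos θ * hB

lemma norm_cos_smul_add_sin_smul {t b : E} (ht : ‖t‖ = 1) (hb : ‖b‖ = 1) (htb : ⟪t, b⟫ = 0)
    (θ : ℝ) : ‖cos θ • t + sin θ • b‖ = 1 := by
  have h := norm_add_sq_eq_norm_sq_add_norm_sq_real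
    (by rw [real_inner_smul_left, real_inner_smul_right, htb, mul_zero, mul_zero] :
      ⟪cos θ • t, sin θ • b⟫ = 0)
  rw [norm_smul, norm_smul, ht, hb, norm_eq_abs, norm_eq_abs, mul_one, mul_one,
    abs_mul_abs_self, abs_mul_abs_self, ← sq, ← sq, ← sq, cos_sq_add_sin_sq] at h
  exact (pow_eq_one_iff_of_nonneg (norm_nonneg _) two_ne_zero).mp h

namespace IsFrenetFrameOn

variable {a b : ℝ} {T N B : ℝ → E} {κ τ : ℝ → ℝ} {s : ℝ}

lemma inner_combination (hF : IsFrenetFrameOn a b T N B κ τ) (hs : s ∈ Ioo a b) (x y z : ℝ) :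
    ⟪x • T s + y • N s + z • B s, T s⟫ = x ∧ ⟪x • T s + y • N s + z • B s, N s⟫ = y ∧
      ⟪x • T s + y • N s + z • B s, B s⟫ = z := by
  have hNT := hF.inner_tangent_normal s hs
  have hBT := hF.inner_tangent_binormal s hs
  have hBN := hF.inner_normal_binormal s hs
  rw [real_inner_comm] at hNT hBT hBN
  simp [inner_add_left, real_inner_smul_left, hF.norm_tangent s hs,
    hF.norm_normal s hs, hF.norm_binormal s hs, hF.inner_tangent_normal s hs,
    hF.inner_tangent_binormal s hs, hF.inner_normal_binormal s hs, hNT, hBT, hBN]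

lemma hasDerivAt_add_smul_normal (hF : IsFrenetFrameOn a b T N B κ τ) (hs : s ∈ Ioo a b)
    {Nint : ℝ → E} {lam : ℝ → ℝ} {l : ℝ} (hNint : HasDerivAt Nint (N s) s)
    (hlam : HasDerivAt lam l s) :
    HasDerivAt (fun u => Nint u + lam u • N u)
      ((-(lam s * κ s)) • T s + (1 + l) • N s + (lam s * τ s) • B s) s := by
  refine (hNint.add (hlam.smul (hF.hasDerivAt_normal s hs))).congr_deriv ?_
  module

lemma hasDerivAt_cos_smul_add_sin_smul (hF : IsFrenetFrameOn a b T N B κ τ) (hs : s ∈ Ioo a b)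
    (θ : ℝ) : HasDerivAt (fun u => cos θ • T u + sin θ • B u)
      ((cos θ * κ s - sin θ * τ s) • N s) s := by
  refine (((hF.hasDerivAt_tangent s hs).const_smul (cos θ)).add
    ((hF.hasDerivAt_binormal s hs).const_smul (sin θ))).congr_deriv ?_
  module

lemma inner_normal_eq_zero_of_inner_tangent_const (hF : IsFrenetFrameOn a b T N B κ τ)
    (hs : s ∈ Ioo a b) {Tb Nb : ℝ → E} {c μ : ℝ} (hTTb : ∀ u ∈ Ioo a b, ⟪T u, Tb u⟫ = c)
    (hTb : HasDerivAt Tb (μ • Nb s) s) (hNb : Nb s = N s ∨ Nb s = -N s) :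
    ⟪N s, Tb s⟫ = 0 := by
  have hTNb : ⟪T s, Nb s⟫ = 0 := by
    rcases hNb with h | h <;> simp [h, hF.inner_tangent_normal s hs]
  have hconst : HasDerivAt (fun u => ⟪T u, Tb u⟫) 0 s :=
    (hasDerivAt_const s c).congr_of_eventuallyEq
      (Filter.eventually_of_mem (isOpen_Ioo.mem_nhds hs) hTTb)
  have h := ((hF.hasDerivAt_tangent s hs).inner ℝ hTb).unique hconst
  rw [real_inner_smul_right, real_inner_smul_left, hTNb, mul_zero, zero_add] at h
  exact (mul_eq_zero.mp h).resolve_left (hF.curvature_pos s hs).ne'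

lemma isNBertrandMateOn_of_torsion_eq (hF : IsFrenetFrameOn a b T N B κ τ) {Nint : ℝ → E}
    (hNint : ∀ s ∈ Ioo a b, HasDerivAt Nint (N s) s) {θ : ℝ} (hcos : 0 < cos θ)
    (hτ : ∀ s ∈ Ioo a b, τ s = -tan θ * κ s) :
    IsNBertrandMateOn a b T N B (fun s => a - s) (fun _ => -1) (fun s => (s - a) * κ s / cos θ)
      (fun s => (s - a)⁻¹) Nint (fun s => Nint s + (a - s) • N s)
      (fun s => cos θ • T s + sin θ • B s) N θ := by
  have hsa : ∀ s ∈ Ioo a b, 0 < s - a := fun s hs => sub_pos.2 hs.1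
  refine ⟨hcos.ne', fun s _ => (hasDerivAt_id' s).const_sub a, hNint, fun _ => rfl,
    fun s hs => ?_, fun s hs => ?_, fun s hs => ?_, fun s hs => ?_,
    fun s hs => inv_pos.2 (hsa s hs), hF.norm_normal, fun _ _ => Or.inl rfl,
    fun s hs => ?_, fun s hs => ?_⟩
  · refine (hF.hasDerivAt_add_smul_normal hs (hNint s hs)
      ((hasDerivAt_id' s).const_sub a)).congr_deriv ?_
    have := hcos.ne'
    rw [hτ s hs, tan_eq_sin_div_cos]
    match_scalars <;> field_simp <;> ring
  · have := hF.curvature_pos s hs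
    have := hsa s hs
    positivity
  · exact norm_cos_smul_add_sin_smul (hF.norm_tangent s hs) (hF.norm_binormal s hs)
      (hF.inner_tangent_binormal s hs) θ
  · refine (hF.hasDerivAt_cos_smul_add_sin_smul hs θ).congr_deriv ?_
    have := (hsa s hs).ne'
    rw [hτ s hs, tan_eq_sin_div_cos]
    congr 1
    field_simp
    linear_combination κ s * sin_sq_add_cos_sq θ
  · simpa [real_inner_comm] using (hF.inner_combination hs (cos θ) 0 (sin θ)).1
  · simpa [real_inner_comm] using (hF.inner_combination hs (cos θ) 0 (sin θ)).2.2

lemma exists_isNBertrandMateOn [CompleteSpace E] (hF : IsFrenetFrameOn a b T N B κ τ) {m : ℝ}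
    (hm : ∀ s ∈ Ioo a b, τ s / κ s = m) :
    ∃ (lam lamd σ κb : ℝ → ℝ) (Nint β Tb Nb : ℝ → E) (θ : ℝ),
      IsNBertrandMateOn a b T N B lam lamd σ κb Nint β Tb Nb θ := by
  obtain ⟨Nint, hNint⟩ := exists_hasDerivAt_eq_on_Ioo fun s hs =>
    (hF.hasDerivAt_normal s hs).continuousAt.continuousWithinAt
  refine ⟨_, _, _, _, _, _, _, _, arctan (-m),
    hF.isNBertrandMateOn_of_torsion_eq hNint (cos_arctan_pos _) fun s hs => ?_⟩
  rw [tan_arctan, neg_neg, ← hm s hs, div_mul_cancel₀ _ (hF.curvature_pos s hs).ne']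

end IsFrenetFrameOn

namespace IsNBertrandMateOn

variable {a b : ℝ} {T N B : ℝ → E} {κ τ : ℝ → ℝ} {lam lamd σ κb : ℝ → ℝ}
  {Nint β Tb Nb : ℝ → E} {θ : ℝ}

lemma lamd_eq_neg_one_and_div_eq_neg_tan (hF : IsFrenetFrameOn a b T N B κ τ)
    (h : IsNBertrandMateOn a b T N B lam lamd σ κb Nint β Tb Nb θ) {s : ℝ} (hs : s ∈ Ioo a b) :
    lamd s = -1 ∧ τ s / κ s = -tan θ := by
  obtain ⟨hcos, hlam, hNint, hβ, hβder, hσ, -, hTbder, -, -, hNb, hTTb, hBTb⟩ := h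
  obtain rfl : β = fun u => Nint u + lam u • N u := funext hβ
  have hv := (hβder s hs).unique (hF.hasDerivAt_add_smul_normal hs (hNint s hs) (hlam s hs))
  obtain ⟨hT, hN, hB⟩ := hF.inner_combination hs (-(lam s * κ s)) (1 + lamd s) (lam s * τ s)
  rw [← hv, real_inner_smul_left, real_inner_comm] at hT hN hB
  rw [hTTb s hs] at hT
  rw [hBTb s hs] at hB
  rw [hF.inner_normal_eq_zero_of_inner_tangent_const hs hTTb (hTbder s hs) (hNb s hs)] at hN
  exact ⟨by linarith, div_eq_neg_tan_of_mul_cos_of_mul_sin (hσ s hs).ne' hcos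
    (hF.curvature_pos s hs).ne' hT hB⟩

lemma exists_eq_const_sub_and_div_eq_neg_tan (hF : IsFrenetFrameOn a b T N B κ τ)
    (h : IsNBertrandMateOn a b T N B lam lamd σ κb Nint β Tb Nb θ) :
    (∃ c, ∀ s ∈ Ioo a b, lam s = c - s) ∧ ∀ s ∈ Ioo a b, τ s / κ s = -tan θ :=
  ⟨exists_eq_const_sub_of_hasDerivAt_neg_one fun s hs =>
      (lamd_eq_neg_one_and_div_eq_neg_tan hF h hs).1 ▸ h.2.1 s hs,
    fun _ hs => (lamd_eq_neg_one_and_div_eq_neg_tan hF h hs).2⟩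

end IsNBertrandMateOn

theorem stmt_7_general (a b : ℝ) (T N B : ℝ → EuclideanSpace ℝ (Fin 3)) (κ τ : ℝ → ℝ)
    (hT1 : ∀ s ∈ Set.Ioo a b, ‖T s‖ = 1)
    (hN1 : ∀ s ∈ Set.Ioo a b, ‖N s‖ = 1)
    (hB1 : ∀ s ∈ Set.Ioo a b, ‖B s‖ = 1)
    (hTN : ∀ s ∈ Set.Ioo a b, ⟪T s, N s⟫ = 0)
    (hTB : ∀ s ∈ Set.Ioo a b, ⟪T s, B s⟫ = 0)
    (hNB : ∀ s ∈ Set.Ioo a b, ⟪N s, B s⟫ = 0)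
    (hκpos : ∀ s ∈ Set.Ioo a b, 0 < κ s)
    (hTder : ∀ s ∈ Set.Ioo a b, HasDerivAt T (κ s • N s) s)
    (hNder : ∀ s ∈ Set.Ioo a b, HasDerivAt N ((-κ s) • T s + τ s • B s) s)
    (hBder : ∀ s ∈ Set.Ioo a b, HasDerivAt B ((-τ s) • N s) s)
    :
    ((∃ (lam lamd σ κb : ℝ → ℝ) (Nint β Tb Nb : ℝ → EuclideanSpace ℝ (Fin 3)) (θ : ℝ),
        Real.cos θ ≠ 0 ∧
        (∀ s ∈ Set.Ioo a b, HasDerivAt lam (lamd s) s) ∧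
        (∀ s ∈ Set.Ioo a b, HasDerivAt Nint (N s) s) ∧
        (∀ s, β s = Nint s + lam s • N s) ∧
        (∀ s ∈ Set.Ioo a b, HasDerivAt β (σ s • Tb s) s) ∧
        (∀ s ∈ Set.Ioo a b, 0 < σ s) ∧
        (∀ s ∈ Set.Ioo a b, ‖Tb s‖ = 1) ∧
        (∀ s ∈ Set.Ioo a b, HasDerivAt Tb ((σ s * κb s) • Nb s) s) ∧
        (∀ s ∈ Set.Ioo a b, 0 < κb s) ∧
        (∀ s ∈ Set.Ioo a b, ‖Nb s‖ = 1) ∧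
        (∀ s ∈ Set.Ioo a b, Nb s = N s ∨ Nb s = -N s) ∧
        (∀ s ∈ Set.Ioo a b, ⟪T s, Tb s⟫ = Real.cos θ) ∧
        (∀ s ∈ Set.Ioo a b, ⟪B s, Tb s⟫ = Real.sin θ)) ↔
      (∃ m : ℝ, ∀ s ∈ Set.Ioo a b, τ s / κ s = m)) ∧
    (∀ (lam lamd σ κb : ℝ → ℝ) (Nint β Tb Nb : ℝ → EuclideanSpace ℝ (Fin 3)) (θ : ℝ),
        Real.cos θ ≠ 0 →
        (∀ s ∈ Set.Ioo a b, HasDerivAt lam (lamd s) s) →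
        (∀ s ∈ Set.Ioo a b, HasDerivAt Nint (N s) s) →
        (∀ s, β s = Nint s + lam s • N s) →
        (∀ s ∈ Set.Ioo a b, HasDerivAt β (σ s • Tb s) s) →
        (∀ s ∈ Set.Ioo a b, 0 < σ s) →
        (∀ s ∈ Set.Ioo a b, ‖Tb s‖ = 1) →
        (∀ s ∈ Set.Ioo a b, HasDerivAt Tb ((σ s * κb s) • Nb s) s) →
        (∀ s ∈ Set.Ioo a b, 0 < κb s) →
        (∀ s ∈ Set.Ioo a b, ‖Nb s‖ = 1) →
        (∀ s ∈ Set.Ioo a b, Nb s = N s ∨ Nb s = -N s) →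
        (∀ s ∈ Set.Ioo a b, ⟪T s, Tb s⟫ = Real.cos θ) →
        (∀ s ∈ Set.Ioo a b, ⟪B s, Tb s⟫ = Real.sin θ) →
        ((∃ c : ℝ, ∀ s ∈ Set.Ioo a b, lam s = c - s) ∧
          ∀ s ∈ Set.Ioo a b, τ s / κ s = -Real.tan θ)) := by
  have hF : IsFrenetFrameOn a b T N B κ τ :=
    ⟨hT1, hN1, hB1, hTN, hTB, hNB, hκpos, hTder, hNder, hBder⟩
  refine ⟨⟨fun ⟨_, _, _, _, _, _, _, _, θ, h⟩ =>
      ⟨-Real.tan θ, (IsNBertrandMateOn.exists_eq_const_sub_and_div_eq_neg_tan hF h).2⟩,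
    fun ⟨_, hm⟩ => hF.exists_isNBertrandMateOn hm⟩, ?_⟩
  intro _ _ _ _ _ _ _ _ _ h₁ h₂ h₃ h₄ h₅ h₆ h₇ h₈ h₉ h₁₀ h₁₁ h₁₂ h₁₃
  exact IsNBertrandMateOn.exists_eq_const_sub_and_div_eq_neg_tan hF
    ⟨h₁, h₂, h₃, h₄, h₅, h₆, h₇, h₈, h₉, h₁₀, h₁₁, h₁₂, h₁₃⟩

/-- γ is an N-Bertrand curve iff γ is a general helix (τ/κ constant);
moreover for any N-Bertrand mate data one has λ(s) = c - s and τ/κ = -tan θ. -/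
theorem stmt_7 (a b : ℝ) (γ T N B : ℝ → EuclideanSpace ℝ (Fin 3)) (κ τ : ℝ → ℝ)
    (hγT : ∀ s ∈ Set.Ioo a b, HasDerivAt γ (T s) s)
    (hT1 : ∀ s ∈ Set.Ioo a b, ‖T s‖ = 1)
    (hN1 : ∀ s ∈ Set.Ioo a b, ‖N s‖ = 1)
    (hB1 : ∀ s ∈ Set.Ioo a b, ‖B s‖ = 1)
    (hTN : ∀ s ∈ Set.Ioo a b, ⟪T s, N s⟫ = 0)
    (hTB : ∀ s ∈ Set.Ioo a b, ⟪T s, B s⟫ = 0)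
    (hNB : ∀ s ∈ Set.Ioo a b, ⟪N s, B s⟫ = 0)
    (horient : ∀ s ∈ Set.Ioo a b, B s = cross3 (T s) (N s))
    (hκpos : ∀ s ∈ Set.Ioo a b, 0 < κ s)
    (hTder : ∀ s ∈ Set.Ioo a b, HasDerivAt T (κ s • N s) s)
    (hNder : ∀ s ∈ Set.Ioo a b, HasDerivAt N ((-κ s) • T s + τ s • B s) s)
    (hBder : ∀ s ∈ Set.Ioo a b, HasDerivAt B ((-τ s) • N s) s)
    :
    ((∃ (lam lamd σ κb : ℝ → ℝ) (Nint β Tb Nb : ℝ → EuclideanSpace ℝ (Fin 3)) (θ : ℝ),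
        Real.cos θ ≠ 0 ∧
        (∀ s ∈ Set.Ioo a b, HasDerivAt lam (lamd s) s) ∧
        (∀ s ∈ Set.Ioo a b, HasDerivAt Nint (N s) s) ∧
        (∀ s, β s = Nint s + lam s • N s) ∧
        (∀ s ∈ Set.Ioo a b, HasDerivAt β (σ s • Tb s) s) ∧
        (∀ s ∈ Set.Ioo a b, 0 < σ s) ∧
        (∀ s ∈ Set.Ioo a b, ‖Tb s‖ = 1) ∧
        (∀ s ∈ Set.Ioo a b, HasDerivAt Tb ((σ s * κb s) • Nb s) s) ∧
        (∀ s ∈ Set.Ioo a b, 0 < κb s) ∧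
        (∀ s ∈ Set.Ioo a b, ‖Nb s‖ = 1) ∧
        (∀ s ∈ Set.Ioo a b, Nb s = N s ∨ Nb s = -N s) ∧
        (∀ s ∈ Set.Ioo a b, ⟪T s, Tb s⟫ = Real.cos θ) ∧
        (∀ s ∈ Set.Ioo a b, ⟪B s, Tb s⟫ = Real.sin θ)) ↔
      (∃ m : ℝ, ∀ s ∈ Set.Ioo a b, τ s / κ s = m)) ∧
    (∀ (lam lamd σ κb : ℝ → ℝ) (Nint β Tb Nb : ℝ → EuclideanSpace ℝ (Fin 3)) (θ : ℝ),
        Real.cos θ ≠ 0 →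
        (∀ s ∈ Set.Ioo a b, HasDerivAt lam (lamd s) s) →
        (∀ s ∈ Set.Ioo a b, HasDerivAt Nint (N s) s) →
        (∀ s, β s = Nint s + lam s • N s) →
        (∀ s ∈ Set.Ioo a b, HasDerivAt β (σ s • Tb s) s) →
        (∀ s ∈ Set.Ioo a b, 0 < σ s) →
        (∀ s ∈ Set.Ioo a b, ‖Tb s‖ = 1) →
        (∀ s ∈ Set.Ioo a b, HasDerivAt Tb ((σ s * κb s) • Nb s) s) →
        (∀ s ∈ Set.Ioo a b, 0 < κb s) →
        (∀ s ∈ Set.Ioo a b, ‖Nb s‖ = 1) →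
        (∀ s ∈ Set.Ioo a b, Nb s = N s ∨ Nb s = -N s) →
        (∀ s ∈ Set.Ioo a b, ⟪T s, Tb s⟫ = Real.cos θ) →
        (∀ s ∈ Set.Ioo a b, ⟪B s, Tb s⟫ = Real.sin θ) →
        ((∃ c : ℝ, ∀ s ∈ Set.Ioo a b, lam s = c - s) ∧
          ∀ s ∈ Set.Ioo a b, τ s / κ s = -Real.tan θ)) :=
  stmt_7_general a b T N B κ τ hT1 hN1 hB1 hTN hTB hNB hκpos hTder hNder hBder
end

section
/- Let u, w be real constants with u² + w² = 1 and suppose u·κ(s) − w·τ(s) > 0 for all s ∈ I. Define γ_V : I → ℝ³ by γ_V′(s) = u·T(s) + w·B(s). Then γ_V is a unit-speed curve whose Frenet apparatus is given by T_V = uT + wB, N_V = N, B_V = −wT + uB, with curvature κ_V = uκ − wτ and torsion τ_V = wκ + uτ; moreover κ = u·κ_V + w·τ_V and τ = −w·κ_V + u·τ_V. -/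
open scoped RealInnerProductSpace

open scoped Matrix

/-
Rotating the frame about N by the angle θ with (u, w) = (cos θ, sin θ) gives the orthonormal
frame (uT + wB, N, -wT + uB). Differentiating it with the Frenet–Serret equations of (T, N, B)
shows that it satisfies Frenet–Serret equations with κ_V = uκ - wτ and τ_V = wκ + uτ, and
rotating back by -θ recovers κ and τ. The rotated frame is positively oriented by the triple
product expansion (T × N) × N = ⟪T, N⟫ N - ‖N‖² T = -T.
-/

theorem norm_smul_add_smul_eq_one {E : Type*} [NormedAddCommGroup E] [InnerProductSpace ℝ E]
    {x y : E} (hx : ‖x‖ = 1) (hy : ‖y‖ = 1) (hxy : ⟪x, y⟫ = 0) {u w : ℝ}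
    (huw : u ^ 2 + w ^ 2 = 1) : ‖u • x + w • y‖ = 1 := by
  have hsq : ‖u • x + w • y‖ ^ 2 = 1 := by
    rw [norm_add_sq_real, real_inner_smul_left, real_inner_smul_right, hxy, norm_smul,
      norm_smul, hx, hy, Real.norm_eq_abs, Real.norm_eq_abs]
    simpa using huw
  exact (pow_left_inj₀ (norm_nonneg _) zero_le_one two_ne_zero).mp (by rw [hsq, one_pow])

theorem cross3_eq_toLp_crossProduct (x y : EuclideanSpace ℝ (Fin 3)) :
    cross3 x y = WithLp.toLp 2 (x.ofLp ⨯₃ y.ofLp) := by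
  rw [cross_apply]
  rfl

theorem cross3_add_left (x y z : EuclideanSpace ℝ (Fin 3)) :
    cross3 (x + y) z = cross3 x z + cross3 y z := by
  simp only [cross3_eq_toLp_crossProduct, WithLp.ofLp_add, map_add, LinearMap.add_apply,
    WithLp.toLp_add]

theorem cross3_smul_left (c : ℝ) (x y : EuclideanSpace ℝ (Fin 3)) :
    cross3 (c • x) y = c • cross3 x y := by
  simp only [cross3_eq_toLp_crossProduct, WithLp.ofLp_smul, map_smul, LinearMap.smul_apply,
    WithLp.toLp_smul]

theorem cross3_cross3 (x y z : EuclideanSpace ℝ (Fin 3)) :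
    cross3 (cross3 x y) z = ⟪x, z⟫ • y - ⟪y, z⟫ • x := by
  simp only [cross3_eq_toLp_crossProduct, EuclideanSpace.inner_eq_star_dotProduct,
    cross_cross_eq_smul_sub_smul, star_trivial, dotProduct_comm z.ofLp]
  rfl

theorem cross3_smul_add_smul_cross3 {x y : EuclideanSpace ℝ (Fin 3)} (hxy : ⟪x, y⟫ = 0)
    (hy : ‖y‖ = 1) (u w : ℝ) :
    cross3 (u • x + w • cross3 x y) y = (-w) • x + u • cross3 x y := by
  have hyy : ⟪y, y⟫ = 1 := by rw [real_inner_self_eq_norm_sq, hy, one_pow]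
  rw [cross3_add_left, cross3_smul_left, cross3_smul_left, cross3_cross3, hxy, hyy]
  module

theorem stmt_8_general (a b : ℝ) (T N B : ℝ → EuclideanSpace ℝ (Fin 3)) (κ τ : ℝ → ℝ)
    (hT1 : ∀ s ∈ Set.Ioo a b, ‖T s‖ = 1)
    (hN1 : ∀ s ∈ Set.Ioo a b, ‖N s‖ = 1)
    (hB1 : ∀ s ∈ Set.Ioo a b, ‖B s‖ = 1)
    (hTN : ∀ s ∈ Set.Ioo a b, ⟪T s, N s⟫ = 0)
    (hTB : ∀ s ∈ Set.Ioo a b, ⟪T s, B s⟫ = 0)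
    (horient : ∀ s ∈ Set.Ioo a b, B s = cross3 (T s) (N s))
    (hTder : ∀ s ∈ Set.Ioo a b, HasDerivAt T (κ s • N s) s)
    (hNder : ∀ s ∈ Set.Ioo a b, HasDerivAt N ((-κ s) • T s + τ s • B s) s)
    (hBder : ∀ s ∈ Set.Ioo a b, HasDerivAt B ((-τ s) • N s) s)
    (u w : ℝ) (huw : u ^ 2 + w ^ 2 = 1) :
    ∀ s ∈ Set.Ioo a b,
      ‖u • T s + w • B s‖ = 1 ∧
      HasDerivAt (fun t => u • T t + w • B t) ((u * κ s - w * τ s) • N s) s ∧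
      HasDerivAt N
        ((-(u * κ s - w * τ s)) • (u • T s + w • B s) +
          (w * κ s + u * τ s) • ((-w) • T s + u • B s)) s ∧
      HasDerivAt (fun t => (-w) • T t + u • B t) ((-(w * κ s + u * τ s)) • N s) s ∧
      (-w) • T s + u • B s = cross3 (u • T s + w • B s) (N s) ∧
      κ s = u * (u * κ s - w * τ s) + w * (w * κ s + u * τ s) ∧
      τ s = -w * (u * κ s - w * τ s) + u * (w * κ s + u * τ s) := by
  intro s hs
  refine ⟨norm_smul_add_smul_eq_one (hT1 s hs) (hB1 s hs) (hTB s hs) huw, ?_, ?_, ?_, ?_,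
    by linear_combination (-κ s) * huw, by linear_combination (-τ s) * huw⟩
  · exact (((hTder s hs).const_smul u).add ((hBder s hs).const_smul w)).congr_deriv (by module)
  · refine (hNder s hs).congr_deriv ?_
    match_scalars
    · linear_combination κ s * huw
    · linear_combination (-τ s) * huw
  · exact (((hTder s hs).const_smul (-w)).add ((hBder s hs).const_smul u)).congr_deriv
      (by module)
  · rw [horient s hs]
    exact (cross3_smul_add_smul_cross3 (hTN s hs) (hN1 s hs) u w).symm

/-- For constants u, w with u² + w² = 1 and uκ - wτ > 0, the integral
curve γ_V of V = uT + wB is unit speed with Frenet apparatus T_V = uT + wB, N_V = N,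
B_V = -wT + uB, κ_V = uκ - wτ, τ_V = wκ + uτ; and κ = uκ_V + wτ_V, τ = -wκ_V + uτ_V. -/
theorem stmt_8 (a b : ℝ) (γ T N B : ℝ → EuclideanSpace ℝ (Fin 3)) (κ τ : ℝ → ℝ)
    (hγT : ∀ s ∈ Set.Ioo a b, HasDerivAt γ (T s) s)
    (hT1 : ∀ s ∈ Set.Ioo a b, ‖T s‖ = 1)
    (hN1 : ∀ s ∈ Set.Ioo a b, ‖N s‖ = 1)
    (hB1 : ∀ s ∈ Set.Ioo a b, ‖B s‖ = 1)
    (hTN : ∀ s ∈ Set.Ioo a b, ⟪T s, N s⟫ = 0)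
    (hTB : ∀ s ∈ Set.Ioo a b, ⟪T s, B s⟫ = 0)
    (hNB : ∀ s ∈ Set.Ioo a b, ⟪N s, B s⟫ = 0)
    (horient : ∀ s ∈ Set.Ioo a b, B s = cross3 (T s) (N s))
    (hκpos : ∀ s ∈ Set.Ioo a b, 0 < κ s)
    (hTder : ∀ s ∈ Set.Ioo a b, HasDerivAt T (κ s • N s) s)
    (hNder : ∀ s ∈ Set.Ioo a b, HasDerivAt N ((-κ s) • T s + τ s • B s) s)
    (hBder : ∀ s ∈ Set.Ioo a b, HasDerivAt B ((-τ s) • N s) s)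
    (u w : ℝ) (huw : u ^ 2 + w ^ 2 = 1)
    (hκV : ∀ s ∈ Set.Ioo a b, 0 < u * κ s - w * τ s)
    (γV : ℝ → EuclideanSpace ℝ (Fin 3))
    (hγV : ∀ s ∈ Set.Ioo a b, HasDerivAt γV (u • T s + w • B s) s) :
    ∀ s ∈ Set.Ioo a b,
      ‖u • T s + w • B s‖ = 1 ∧
      HasDerivAt (fun t => u • T t + w • B t) ((u * κ s - w * τ s) • N s) s ∧
      HasDerivAt N
        ((-(u * κ s - w * τ s)) • (u • T s + w • B s) +
          (w * κ s + u * τ s) • ((-w) • T s + u • B s)) s ∧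
      HasDerivAt (fun t => (-w) • T t + u • B t) ((-(w * κ s + u * τ s)) • N s) s ∧
      (-w) • T s + u • B s = cross3 (u • T s + w • B s) (N s) ∧
      κ s = u * (u * κ s - w * τ s) + w * (w * κ s + u * τ s) ∧
      τ s = -w * (u * κ s - w * τ s) + u * (w * κ s + u * τ s) :=
  stmt_8_general a b T N B κ τ hT1 hN1 hB1 hTN hTB horient hTder hNder hBder u w huw
end

section
/- Let u, w be real constants with u² + w² = 1, suppose uκ − wτ > 0 on I, and let γ_V be the integral curve of V = uT + wB (so γ_V′ = uT + wB), whose curvature and torsion are κ_V = uκ − wτ and τ_V = wκ + uτ. Then there exist constants (λ, μ) ≠ (0, 0) with λκ + μτ = 1 identically on I if and only if there exist constants (λ̄, μ̄) ≠ (0, 0) with λ̄κ_V + μ̄τ_V = 1 identically on I; explicitly one may take λ̄ = λu − μw and μ̄ = λw + μu. In particular γ is a Bertrand or B-Bertrand curve if and only if γ_V is. -/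
open scoped RealInnerProductSpace

/-!
Since `u² + w² = 1`, the map `(λ, μ) ↦ (λu − μw, λw + μu)` is a rotation of the plane, and
`(κ_V, τ_V)` is `(κ, τ)` rotated by the same angle; the pairing `λκ + μτ` is invariant under
rotating both pairs, and a rotation, like its inverse (replace `w` by `−w`), fixes only `(0, 0)`.
-/

section Rotation

variable {u w : ℝ}

theorem rotate_coeffs_ne_zero (huw : u ^ 2 + w ^ 2 = 1) {l m : ℝ} (hlm : ¬(l = 0 ∧ m = 0)) :
    ¬(l * u - m * w = 0 ∧ l * w + m * u = 0) := by
  rintro ⟨h₁, h₂⟩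
  exact hlm ⟨by linear_combination u * h₁ + w * h₂ - l * huw,
    by linear_combination (-w) * h₁ + u * h₂ - m * huw⟩

theorem rotate_coeffs_pairing (huw : u ^ 2 + w ^ 2 = 1) (l m k t : ℝ) :
    (l * u - m * w) * (u * k - w * t) + (l * w + m * u) * (w * k + u * t) = l * k + m * t := by
  linear_combination (l * k + m * t) * huw

end Rotation

theorem stmt_9_general (a b : ℝ) (κ τ : ℝ → ℝ)
    (u w : ℝ) (huw : u ^ 2 + w ^ 2 = 1) :
    ((∃ lam μ : ℝ, ¬(lam = 0 ∧ μ = 0) ∧ ∀ s ∈ Set.Ioo a b, lam * κ s + μ * τ s = 1) ↔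
      (∃ lam' μ' : ℝ, ¬(lam' = 0 ∧ μ' = 0) ∧
        ∀ s ∈ Set.Ioo a b, lam' * (u * κ s - w * τ s) + μ' * (w * κ s + u * τ s) = 1)) ∧
    (∀ lam μ : ℝ, (∀ s ∈ Set.Ioo a b, lam * κ s + μ * τ s = 1) →
      ∀ s ∈ Set.Ioo a b,
        (lam * u - μ * w) * (u * κ s - w * τ s) +
          (lam * w + μ * u) * (w * κ s + u * τ s) = 1) := by
  have hrotate : ∀ lam μ : ℝ, (∀ s ∈ Set.Ioo a b, lam * κ s + μ * τ s = 1) →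
      ∀ s ∈ Set.Ioo a b,
        (lam * u - μ * w) * (u * κ s - w * τ s) + (lam * w + μ * u) * (w * κ s + u * τ s) = 1 :=
    fun lam μ h s hs => (rotate_coeffs_pairing huw _ _ _ _).trans (h s hs)
  refine ⟨⟨?_, ?_⟩, hrotate⟩
  · rintro ⟨l, m, hlm, h⟩
    exact ⟨_, _, rotate_coeffs_ne_zero huw hlm, hrotate l m h⟩
  · rintro ⟨l, m, hlm, h⟩
    refine ⟨l * u - m * (-w), l * (-w) + m * u,
      rotate_coeffs_ne_zero (by rwa [neg_sq]) hlm, fun s hs => ?_⟩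
    rw [← h s hs]
    ring

/-- With κ_V = uκ - wτ and τ_V = wκ + uτ (u² + w² = 1, uκ - wτ > 0),
there are constants (λ, μ) ≠ (0,0) with λκ + μτ = 1 iff there are (λ̄, μ̄) ≠ (0,0)
with λ̄κ_V + μ̄τ_V = 1; explicitly λ̄ = λu - μw, μ̄ = λw + μu. -/
theorem stmt_9 (a b : ℝ) (γ T N B : ℝ → EuclideanSpace ℝ (Fin 3)) (κ τ : ℝ → ℝ)
    (hγT : ∀ s ∈ Set.Ioo a b, HasDerivAt γ (T s) s)
    (hT1 : ∀ s ∈ Set.Ioo a b, ‖T s‖ = 1)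
    (hN1 : ∀ s ∈ Set.Ioo a b, ‖N s‖ = 1)
    (hB1 : ∀ s ∈ Set.Ioo a b, ‖B s‖ = 1)
    (hTN : ∀ s ∈ Set.Ioo a b, ⟪T s, N s⟫ = 0)
    (hTB : ∀ s ∈ Set.Ioo a b, ⟪T s, B s⟫ = 0)
    (hNB : ∀ s ∈ Set.Ioo a b, ⟪N s, B s⟫ = 0)
    (horient : ∀ s ∈ Set.Ioo a b, B s = cross3 (T s) (N s))
    (hκpos : ∀ s ∈ Set.Ioo a b, 0 < κ s)
    (hTder : ∀ s ∈ Set.Ioo a b, HasDerivAt T (κ s • N s) s)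
    (hNder : ∀ s ∈ Set.Ioo a b, HasDerivAt N ((-κ s) • T s + τ s • B s) s)
    (hBder : ∀ s ∈ Set.Ioo a b, HasDerivAt B ((-τ s) • N s) s)
    (u w : ℝ) (huw : u ^ 2 + w ^ 2 = 1)
    (hκV : ∀ s ∈ Set.Ioo a b, 0 < u * κ s - w * τ s)
    (γV : ℝ → EuclideanSpace ℝ (Fin 3))
    (hγV : ∀ s ∈ Set.Ioo a b, HasDerivAt γV (u • T s + w • B s) s) :
    ((∃ lam μ : ℝ, ¬(lam = 0 ∧ μ = 0) ∧ ∀ s ∈ Set.Ioo a b, lam * κ s + μ * τ s = 1) ↔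
      (∃ lam' μ' : ℝ, ¬(lam' = 0 ∧ μ' = 0) ∧
        ∀ s ∈ Set.Ioo a b, lam' * (u * κ s - w * τ s) + μ' * (w * κ s + u * τ s) = 1)) ∧
    (∀ lam μ : ℝ, (∀ s ∈ Set.Ioo a b, lam * κ s + μ * τ s = 1) →
      ∀ s ∈ Set.Ioo a b,
        (lam * u - μ * w) * (u * κ s - w * τ s) +
          (lam * w + μ * u) * (w * κ s + u * τ s) = 1) :=
  stmt_9_general a b κ τ u w huw
end

section
/- Fix 0 ∈ I, a constant θ₀, and set θ(s) = ∫₀ˢ τ(u)du + θ₀, κ̄(s) = κ(s)cos θ(s), τ̄(s) = κ(s)sin θ(s). If there exist constants (λ, μ) ≠ (0, 0) such that λκ̄(s) + μτ̄(s) = 1 for all s ∈ I, then there exists a constant φ₀ such that 1/κ(s) = √(λ² + μ²)·cos(∫₀ˢ τ(u)du + φ₀) for all s ∈ I; in particular γ satisfies the spherical-curve curvature relation with A = √(λ² + μ²). -/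
open scoped RealInnerProductSpace

open Real in
/-- The phase `φ` is the argument of `lam + μ i`, whose modulus is the amplitude. -/
theorem exists_mul_cos_add_mul_sin_eq_sqrt_mul_cos_sub (lam μ : ℝ) :
    ∃ φ : ℝ, ∀ x : ℝ, lam * cos x + μ * sin x = √(lam ^ 2 + μ ^ 2) * cos (x - φ) := by
  set z : ℂ := ⟨lam, μ⟩
  have hnorm : ‖z‖ = √(lam ^ 2 + μ ^ 2) := by
    simp [z, Complex.norm_def, Complex.normSq_apply, sq]
  refine ⟨z.arg, fun x => ?_⟩
  have hlam : lam = ‖z‖ * cos z.arg := (Complex.norm_mul_cos_arg z).symm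
  have hμ : μ = ‖z‖ * sin z.arg := (Complex.norm_mul_sin_arg z).symm
  rw [← hnorm, cos_sub, hlam, hμ]
  ring

theorem stmt_11_general (a b : ℝ) (κ τ : ℝ → ℝ)
    (hκpos : ∀ s ∈ Set.Ioo a b, 0 < κ s)
    (θ₀ : ℝ) :
    ∀ lam μ : ℝ, ¬(lam = 0 ∧ μ = 0) →
      (∀ s ∈ Set.Ioo a b,
        lam * (κ s * Real.cos ((∫ t in (0:ℝ)..s, τ t) + θ₀)) +
          μ * (κ s * Real.sin ((∫ t in (0:ℝ)..s, τ t) + θ₀)) = 1) →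
      ∃ φ₀ : ℝ, ∀ s ∈ Set.Ioo a b,
        1 / κ s = Real.sqrt (lam ^ 2 + μ ^ 2) *
          Real.cos ((∫ t in (0:ℝ)..s, τ t) + φ₀) := by
  intro lam μ _ h
  obtain ⟨φ, hφ⟩ := exists_mul_cos_add_mul_sin_eq_sqrt_mul_cos_sub lam μ
  refine ⟨θ₀ - φ, fun s hs => ?_⟩
  set θ := (∫ t in (0:ℝ)..s, τ t) + θ₀
  have hinv : 1 / κ s = lam * Real.cos θ + μ * Real.sin θ := by
    rw [div_eq_iff (hκpos s hs).ne', ← h s hs]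
    ring
  rw [hinv, hφ, add_sub_assoc']

/-- With θ(s) = ∫₀ˢ τ + θ₀, κ̄ = κ cos θ, τ̄ = κ sin θ: if there are
constants (λ, μ) ≠ (0,0) with λκ̄ + μτ̄ = 1 on I, then there is a constant φ₀ with
1/κ = √(λ² + μ²)·cos(∫₀ˢ τ + φ₀) on I. -/
theorem stmt_11 (a b : ℝ) (γ T N B : ℝ → EuclideanSpace ℝ (Fin 3)) (κ τ : ℝ → ℝ)
    (hγT : ∀ s ∈ Set.Ioo a b, HasDerivAt γ (T s) s)
    (hT1 : ∀ s ∈ Set.Ioo a b, ‖T s‖ = 1)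
    (hN1 : ∀ s ∈ Set.Ioo a b, ‖N s‖ = 1)
    (hB1 : ∀ s ∈ Set.Ioo a b, ‖B s‖ = 1)
    (hTN : ∀ s ∈ Set.Ioo a b, ⟪T s, N s⟫ = 0)
    (hTB : ∀ s ∈ Set.Ioo a b, ⟪T s, B s⟫ = 0)
    (hNB : ∀ s ∈ Set.Ioo a b, ⟪N s, B s⟫ = 0)
    (horient : ∀ s ∈ Set.Ioo a b, B s = cross3 (T s) (N s))
    (hκpos : ∀ s ∈ Set.Ioo a b, 0 < κ s)
    (hTder : ∀ s ∈ Set.Ioo a b, HasDerivAt T (κ s • N s) s)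
    (hNder : ∀ s ∈ Set.Ioo a b, HasDerivAt N ((-κ s) • T s + τ s • B s) s)
    (hBder : ∀ s ∈ Set.Ioo a b, HasDerivAt B ((-τ s) • N s) s)
    (h0 : (0:ℝ) ∈ Set.Ioo a b) (hτcont : ContinuousOn τ (Set.Ioo a b))
    (θ₀ : ℝ) :
    ∀ lam μ : ℝ, ¬(lam = 0 ∧ μ = 0) →
      (∀ s ∈ Set.Ioo a b,
        lam * (κ s * Real.cos ((∫ t in (0:ℝ)..s, τ t) + θ₀)) +
          μ * (κ s * Real.sin ((∫ t in (0:ℝ)..s, τ t) + θ₀)) = 1) →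
      ∃ φ₀ : ℝ, ∀ s ∈ Set.Ioo a b,
        1 / κ s = Real.sqrt (lam ^ 2 + μ ^ 2) *
          Real.cos ((∫ t in (0:ℝ)..s, τ t) + φ₀) :=
  stmt_11_general a b κ τ hκpos θ₀
end

section
/- Suppose γ lies on a sphere (there exist c ∈ ℝ³ and R > 0 with ‖γ(s) − c‖ = R for all s ∈ I) and τ(s) ≠ 0 for all s ∈ I. Then the differential equation ((1/κ)′ · (1/τ))′ + τ/κ = 0 holds at every s ∈ I. -/
open scoped RealInnerProductSpace

/-- If γ lies on a sphere and τ never vanishes on I, then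
((1/κ)'·(1/τ))' + τ/κ = 0 on I. -/
theorem stmt_14 (a b : ℝ) (γ T N B : ℝ → EuclideanSpace ℝ (Fin 3)) (κ τ : ℝ → ℝ)
    (hγT : ∀ s ∈ Set.Ioo a b, HasDerivAt γ (T s) s)
    (hT1 : ∀ s ∈ Set.Ioo a b, ‖T s‖ = 1)
    (hN1 : ∀ s ∈ Set.Ioo a b, ‖N s‖ = 1)
    (hB1 : ∀ s ∈ Set.Ioo a b, ‖B s‖ = 1)
    (hTN : ∀ s ∈ Set.Ioo a b, ⟪T s, N s⟫ = 0)
    (hTB : ∀ s ∈ Set.Ioo a b, ⟪T s, B s⟫ = 0)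
    (hNB : ∀ s ∈ Set.Ioo a b, ⟪N s, B s⟫ = 0)
    (horient : ∀ s ∈ Set.Ioo a b, B s = cross3 (T s) (N s))
    (hκpos : ∀ s ∈ Set.Ioo a b, 0 < κ s)
    (hTder : ∀ s ∈ Set.Ioo a b, HasDerivAt T (κ s • N s) s)
    (hNder : ∀ s ∈ Set.Ioo a b, HasDerivAt N ((-κ s) • T s + τ s • B s) s)
    (hBder : ∀ s ∈ Set.Ioo a b, HasDerivAt B ((-τ s) • N s) s)
    (hκsm : ContDiffOn ℝ (⊤ : ℕ∞) κ (Set.Ioo a b))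
    (hτsm : ContDiffOn ℝ (⊤ : ℕ∞) τ (Set.Ioo a b))
    (c : EuclideanSpace ℝ (Fin 3)) (R : ℝ) (hR : 0 < R)
    (hsph : ∀ s ∈ Set.Ioo a b, ‖γ s - c‖ = R)
    (hτne : ∀ s ∈ Set.Ioo a b, τ s ≠ 0) :
    ∀ s ∈ Set.Ioo a b,
      deriv (fun t => deriv (fun r => 1 / κ r) t * (1 / τ t)) s + τ s / κ s = 0 := by
  set f : ℝ → EuclideanSpace ℝ (Fin 3) := fun t => γ t - c with hf
  have hfder : ∀ s ∈ Set.Ioo a b, HasDerivAt f (T s) s := fun s hs => by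
    exact (hγT s hs).sub_const c
  have hopen : ∀ s ∈ Set.Ioo a b, Set.Ioo a b ∈ nhds s := fun s hs =>
    isOpen_Ioo.mem_nhds hs
  -- Step 1 : ⟪T, f⟫ = 0 on Ioo
  have hTf : ∀ s ∈ Set.Ioo a b, ⟪T s, f s⟫ = 0 := by
    intro s hs
    have h1 : HasDerivAt (fun t => ⟪f t, f t⟫) (⟪f s, T s⟫ + ⟪T s, f s⟫) s :=
      HasDerivAt.inner ℝ (hfder s hs) (hfder s hs)
    have h2 : HasDerivAt (fun t => ⟪f t, f t⟫) 0 s := by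
      have heq : (fun t : ℝ => ⟪f t, f t⟫) =ᶠ[nhds s] fun _ => R ^ 2 := by
        filter_upwards [hopen s hs] with t ht
        rw [real_inner_self_eq_norm_sq, hsph t ht]
      exact (hasDerivAt_const s (R ^ 2)).congr_of_eventuallyEq heq
    have huniq := h1.unique h2
    have hc : ⟪f s, T s⟫ = ⟪T s, f s⟫ := real_inner_comm _ _
    linarith
  -- Step 2 : ⟪N, f⟫ = -1/κ on Ioo
  have hNf : ∀ s ∈ Set.Ioo a b, ⟪N s, f s⟫ = -(1 / κ s) := by
    intro s hs
    have h1 : HasDerivAt (fun t => ⟪T t, f t⟫) (⟪T s, T s⟫ + ⟪κ s • N s, f s⟫) s :=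
      HasDerivAt.inner ℝ (hTder s hs) (hfder s hs)
    have h2 : HasDerivAt (fun t => ⟪T t, f t⟫) 0 s := by
      have heq : (fun t : ℝ => ⟪T t, f t⟫) =ᶠ[nhds s] fun _ => (0 : ℝ) := by
        filter_upwards [hopen s hs] with t ht
        exact hTf t ht
      exact (hasDerivAt_const s (0 : ℝ)).congr_of_eventuallyEq heq
    have huniq := h1.unique h2
    have e1 : ⟪T s, T s⟫ = 1 := by
      rw [real_inner_self_eq_norm_sq, hT1 s hs]; norm_num
    have e2 : ⟪κ s • N s, f s⟫ = κ s * ⟪N s, f s⟫ := real_inner_smul_left _ _ _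
    rw [e1, e2] at huniq
    have hκ := (hκpos s hs).ne'
    rw [← neg_div, eq_div_iff hκ]
    linarith
  -- differentiability of 1/κ
  have hinvκ : ∀ s ∈ Set.Ioo a b,
      HasDerivAt (fun r => 1 / κ r) (deriv (fun r => 1 / κ r) s) s := by
    intro s hs
    have hκd : DifferentiableAt ℝ κ s :=
      (hκsm.contDiffAt (hopen s hs)).differentiableAt (by simp)
    exact ((differentiableAt_const (1:ℝ)).div hκd (hκpos s hs).ne').hasDerivAt
  -- Step 3 : ⟪B, f⟫ relation
  have hBf : ∀ s ∈ Set.Ioo a b,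
      deriv (fun r => 1 / κ r) s * (1 / τ s) = -⟪B s, f s⟫ := by
    intro s hs
    have h1 : HasDerivAt (fun t => ⟪N t, f t⟫)
        (⟪N s, T s⟫ + ⟪(-κ s) • T s + τ s • B s, f s⟫) s :=
      HasDerivAt.inner ℝ (hNder s hs) (hfder s hs)
    have h2 : HasDerivAt (fun t => ⟪N t, f t⟫) (-(deriv (fun r => 1 / κ r) s)) s := by
      have heq : (fun t : ℝ => ⟪N t, f t⟫) =ᶠ[nhds s] fun t => -(1 / κ t) := by
        filter_upwards [hopen s hs] with t ht
        exact hNf t ht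
      exact ((hinvκ s hs).neg).congr_of_eventuallyEq heq
    have huniq := h1.unique h2
    have e1 : ⟪N s, T s⟫ = 0 := by rw [real_inner_comm]; exact hTN s hs
    have e2 : ⟪(-κ s) • T s + τ s • B s, f s⟫ = τ s * ⟪B s, f s⟫ := by
      rw [inner_add_left, real_inner_smul_left, real_inner_smul_left, hTf s hs]
      ring
    rw [e1, e2, zero_add] at huniq
    have hτ := hτne s hs
    rw [mul_one_div, div_eq_iff hτ]
    linarith
  -- Step 4
  intro s hs
  have h1 : HasDerivAt (fun t => ⟪B t, f t⟫) (⟪B s, T s⟫ + ⟪(-τ s) • N s, f s⟫) s :=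
    HasDerivAt.inner ℝ (hBder s hs) (hfder s hs)
  have hval : ⟪B s, T s⟫ + ⟪(-τ s) • N s, f s⟫ = τ s / κ s := by
    have e1 : ⟪B s, T s⟫ = 0 := by rw [real_inner_comm]; exact hTB s hs
    have e2 : ⟪(-τ s) • N s, f s⟫ = -τ s * ⟪N s, f s⟫ := real_inner_smul_left _ _ _
    rw [e1, e2, hNf s hs, zero_add]
    field_simp
  rw [hval] at h1
  have h2 : HasDerivAt (fun t => deriv (fun r => 1 / κ r) t * (1 / τ t)) (-(τ s / κ s)) s := by
    have heq : (fun t => deriv (fun r => 1 / κ r) t * (1 / τ t)) =ᶠ[nhds s]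
        fun t => -⟪B t, f t⟫ := by
      filter_upwards [hopen s hs] with t ht
      exact hBf t ht
    exact h1.neg.congr_of_eventuallyEq heq
  rw [h2.deriv]
  ring
end

section
/- Let γ : I → ℝ³ be a smooth unit-speed spherical curve with ‖γ(s)‖ = 1 for all s, Sabban frame {γ, T = γ′, Y = γ × T}, and geodesic curvature κ_g(s) = det(γ(s), T(s), T′(s)). Fix constants a ≠ 0 and θ with sin θ ≠ 0, and assume κ_g(s)·cot θ ≠ 1 for all s ∈ I. Then the curve γ̃ defined by γ̃′(s) = a·γ(s) + a·cot θ·Y(s) is a regular curve with nonvanishing curvature κ̃ and torsion τ̃ for which there exist constants λ ≠ 0 and μ with λκ̃ + μτ̃ = 1 identically; i.e. γ̃ is a Bertrand curve. -/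
open scoped RealInnerProductSpace

noncomputable def det3 (x y z : EuclideanSpace ℝ (Fin 3)) : ℝ :=
  x 0 * (y 1 * z 2 - y 2 * z 1) - x 1 * (y 0 * z 2 - y 2 * z 0) +
    x 2 * (y 0 * z 1 - y 1 * z 0)

private theorem hasDerivAt_comps' {f : ℝ → EuclideanSpace ℝ (Fin 3)}
    {v : EuclideanSpace ℝ (Fin 3)} {s : ℝ}
    (h : ∀ i, HasDerivAt (fun t => f t i) (v i) s) : HasDerivAt f v s := by
  rw [hasDerivAt_iff_hasFDerivAt, ← hasFDerivWithinAt_univ, hasFDerivWithinAt_piLp]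
  intro i
  have he : (PiLp.proj 2 (fun _ : Fin 3 => ℝ) i).comp (ContinuousLinearMap.toSpanSingleton ℝ v)
      = ContinuousLinearMap.toSpanSingleton ℝ (v i) := by ext; simp
  rw [he]
  exact ((h i).hasFDerivAt).hasFDerivWithinAt

private theorem hasDerivAt_app' {f : ℝ → EuclideanSpace ℝ (Fin 3)}
    {v : EuclideanSpace ℝ (Fin 3)} {s : ℝ}
    (h : HasDerivAt f v s) (i : Fin 3) : HasDerivAt (fun t => f t i) (v i) s := by
  have := (PiLp.hasFDerivAt_apply (𝕜 := ℝ) 2 (f s) i).comp_hasDerivAt s h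
  exact this

private theorem normsq3 {x : EuclideanSpace ℝ (Fin 3)} (h : ‖x‖ = 1) :
    x 0 ^ 2 + x 1 ^ 2 + x 2 ^ 2 = 1 := by
  have h2 : ‖x‖ ^ 2 = 1 := by rw [h]; norm_num
  rw [EuclideanSpace.norm_eq, Real.sq_sqrt (by positivity)] at h2
  simpa [Fin.sum_univ_three, Real.norm_eq_abs, sq_abs] using h2

private theorem norm_eq_one3 {x : EuclideanSpace ℝ (Fin 3)}
    (h : x 0 ^ 2 + x 1 ^ 2 + x 2 ^ 2 = 1) : ‖x‖ = 1 := by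
  rw [EuclideanSpace.norm_eq]
  simp only [Real.norm_eq_abs, Fin.sum_univ_three, sq_abs]
  rw [h]; exact Real.sqrt_one

private theorem inner3 (x y : EuclideanSpace ℝ (Fin 3)) :
    ⟪x, y⟫ = x 0 * y 0 + x 1 * y 1 + x 2 * y 2 := by
  simp only [PiLp.inner_apply, RCLike.inner_apply, conj_trivial, Fin.sum_univ_three]
  ring

private theorem claimA (g0 g1 g2 t0 t1 t2 d0 d1 d2 k : ℝ)
    (hT : t0^2+t1^2+t2^2 = 1)
    (hgT : g0*t0+g1*t1+g2*t2 = 0)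
    (hTd : t0*d0+t1*d1+t2*d2 = 0)
    (hk : k = g0*(t1*d2-t2*d1) - g1*(t0*d2-t2*d0) + g2*(t0*d1-t1*d0)) :
    g1*d2 - g2*d1 = -k*t0 ∧ g2*d0 - g0*d2 = -k*t1 ∧ g0*d1 - g1*d0 = -k*t2 := by
  subst hk
  refine ⟨?_, ?_, ?_⟩
  · linear_combination (-(g1*d2-g2*d1))*hT + (t2*g1 - t1*g2)*hTd + (t1*d2 - t2*d1)*hgT
  · linear_combination (-(g2*d0-g0*d2))*hT + (t0*g2 - t2*g0)*hTd + (t2*d0 - t0*d2)*hgT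
  · linear_combination (-(g0*d1-g1*d0))*hT + (t1*g0 - t0*g1)*hTd + (t0*d1 - t1*d0)*hgT

private theorem claimB (g0 g1 g2 t0 t1 t2 d0 d1 d2 k : ℝ)
    (hg : g0^2+g1^2+g2^2 = 1)
    (hgd : g0*d0+g1*d1+g2*d2 = -1)
    (hA0 : g1*d2 - g2*d1 = -k*t0) (hA1 : g2*d0 - g0*d2 = -k*t1)
    (hA2 : g0*d1 - g1*d0 = -k*t2) :
    d0 = -g0 + k*(g1*t2-g2*t1) ∧ d1 = -g1 + k*(g2*t0-g0*t2) ∧ d2 = -g2 + k*(g0*t1-g1*t0) := by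
  refine ⟨?_, ?_, ?_⟩
  · linear_combination (-g1)*hA2 + g2*hA1 + g0*hgd + (-d0)*hg
  · linear_combination (-g2)*hA0 + g0*hA2 + g1*hgd + (-d1)*hg
  · linear_combination (-g0)*hA1 + g1*hA0 + g2*hgd + (-d2)*hg

private theorem val_Tt (E δ σ0 c k Ti : ℝ) (hE : E*E = 1) (hσ : σ0 ≠ 0) :
    δ*(Ti + c*(-k*Ti)) = σ0 * (E*δ*(1-c*k)/σ0) * (E*Ti) := by
  field_simp
  linear_combination (-(δ*Ti*(1-c*k)))*hE

private theorem val_Nt (E δ σ0 c k gi yi : ℝ) (hσ : σ0 ≠ 0) (hδc : δ^2*(1+c^2) = 1) :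
    E*(-gi + k*yi) = σ0*(-(E*δ*(1-c*k)/σ0)*(δ*(gi + c*yi)) +
      (δ*(c+k)/σ0)*(E*(δ*(yi - c*gi)))) := by
  field_simp
  linear_combination (E*(gi-k*yi))*hδc

private theorem val_Bt (E δ σ0 c k Ti : ℝ) (hσ : σ0 ≠ 0) :
    (E*δ)*((-k*Ti) - c*Ti) = σ0*(-(δ*(c+k)/σ0)*(E*Ti)) := by
  field_simp; ring

private theorem val_bert (E δ σ0 A c k : ℝ) (hE : E*E = 1) (hδσ : δ*σ0 = A)
    (hδc : δ^2*(1+c^2) = 1) (hσ : σ0 ≠ 0) :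
    (E*A)*(E*δ*(1-c*k)/σ0) + (A*c)*(δ*(c+k)/σ0) = 1 := by
  field_simp
  linear_combination (A*δ*(1-c*k))*hE + (-(δ*(1+c^2)))*hδσ + σ0*hδc

/-- Izumiya–Takeuchi construction: if γ is a unit-speed curve on the
unit sphere with Sabban frame {γ, T, Y = γ × T} and geodesic curvature κ_g, a ≠ 0,
sin θ ≠ 0, and κ_g·cot θ ≠ 1 on I, then the curve γ̃ with
γ̃' = a·γ + a·cot θ·Y is regular with nonvanishing curvature κ̃ and torsion τ̃
satisfying λκ̃ + μτ̃ = 1 for some constants λ ≠ 0, μ: γ̃ is a Bertrand curve. -/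
theorem stmt_15 (a b : ℝ) (γ T Td Y : ℝ → EuclideanSpace ℝ (Fin 3)) (κg : ℝ → ℝ)
    (hγsm : ContDiffOn ℝ (⊤ : ℕ∞) γ (Set.Ioo a b))
    (hsph : ∀ s ∈ Set.Ioo a b, ‖γ s‖ = 1)
    (hγT : ∀ s ∈ Set.Ioo a b, HasDerivAt γ (T s) s)
    (hT1 : ∀ s ∈ Set.Ioo a b, ‖T s‖ = 1)
    (hTd : ∀ s ∈ Set.Ioo a b, HasDerivAt T (Td s) s)
    (hY : ∀ s ∈ Set.Ioo a b, Y s = cross3 (γ s) (T s))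
    (hκg : ∀ s ∈ Set.Ioo a b, κg s = det3 (γ s) (T s) (Td s))
    (A θ : ℝ) (hA : A ≠ 0) (hθ : Real.sin θ ≠ 0)
    (hreg : ∀ s ∈ Set.Ioo a b, κg s * (Real.cos θ / Real.sin θ) ≠ 1)
    (γt : ℝ → EuclideanSpace ℝ (Fin 3))
    (hγt : ∀ s ∈ Set.Ioo a b,
      HasDerivAt γt (A • γ s + (A * (Real.cos θ / Real.sin θ)) • Y s) s) :
    ∃ (Tt Nt Bt : ℝ → EuclideanSpace ℝ (Fin 3)) (σ κt τt : ℝ → ℝ),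
      (∀ s ∈ Set.Ioo a b,
        HasDerivAt γt (σ s • Tt s) s ∧ 0 < σ s ∧ ‖Tt s‖ = 1 ∧
        HasDerivAt Tt ((σ s * κt s) • Nt s) s ∧ 0 < κt s ∧ ‖Nt s‖ = 1 ∧
        ⟪Tt s, Nt s⟫ = 0 ∧ Bt s = cross3 (Tt s) (Nt s) ∧
        HasDerivAt Nt (σ s • ((-κt s) • Tt s + τt s • Bt s)) s ∧
        HasDerivAt Bt (σ s • ((-τt s) • Nt s)) s) ∧
      ∃ lam μ : ℝ, lam ≠ 0 ∧ ∀ s ∈ Set.Ioo a b, lam * κt s + μ * τt s = 1 := by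
  by_cases hab : a < b
  case neg =>
    have hIe : Set.Ioo a b = ∅ := Set.Ioo_eq_empty hab
    refine ⟨fun _ => 0, fun _ => 0, fun _ => 0, fun _ => 1, fun _ => 1, fun _ => 0,
      ?_, 1, 0, one_ne_zero, ?_⟩ <;> · intro s hs; rw [hIe] at hs; exact absurd hs (Set.notMem_empty s)
  case pos =>
  set I := Set.Ioo a b with hI
  have hIo : IsOpen I := isOpen_Ioo
  set c : ℝ := Real.cos θ / Real.sin θ with hc
  set σ0 : ℝ := |A| / |Real.sin θ| with hσ0def
  have hσ0 : 0 < σ0 := div_pos (abs_pos.2 hA) (abs_pos.2 hθ)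
  have hσne : σ0 ≠ 0 := ne_of_gt hσ0
  set δ : ℝ := A / σ0 with hδdef
  have hδσ : δ * σ0 = A := div_mul_cancel₀ A hσne
  have hδ0 : δ ≠ 0 := by
    intro h; apply hA; rw [← hδσ, h, zero_mul]
  have hδ2 : δ ^ 2 = Real.sin θ ^ 2 := by
    rw [hδdef, hσ0def]
    rw [div_div_eq_mul_div, div_pow, mul_pow, sq_abs, sq_abs]
    field_simp
  have hδc : δ ^ 2 * (1 + c ^ 2) = 1 := by
    rw [hδ2, hc]
    field_simp
    exact Real.sin_sq_add_cos_sq θ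
  -- squared norms
  have hgg : ∀ s ∈ I, (γ s 0)^2 + (γ s 1)^2 + (γ s 2)^2 = 1 := fun s hs => normsq3 (hsph s hs)
  have hTT : ∀ s ∈ I, (T s 0)^2 + (T s 1)^2 + (T s 2)^2 = 1 := fun s hs => normsq3 (hT1 s hs)
  -- γ ⟂ T
  have hgT0 : ∀ s ∈ I, γ s 0*T s 0 + γ s 1*T s 1 + γ s 2*T s 2 = 0 := by
    intro s hs
    have h0 := hasDerivAt_app' (hγT s hs) 0
    have h1 := hasDerivAt_app' (hγT s hs) 1
    have h2 := hasDerivAt_app' (hγT s hs) 2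
    have hF : HasDerivAt (fun t => γ t 0*γ t 0 + γ t 1*γ t 1 + γ t 2*γ t 2)
        (T s 0*γ s 0 + γ s 0*T s 0 + (T s 1*γ s 1 + γ s 1*T s 1) +
          (T s 2*γ s 2 + γ s 2*T s 2)) s := ((h0.mul h0).add (h1.mul h1)).add (h2.mul h2)
    have hF0 : HasDerivAt (fun t => γ t 0*γ t 0 + γ t 1*γ t 1 + γ t 2*γ t 2) 0 s := by
      refine (hasDerivAt_const s (1:ℝ)).congr_of_eventuallyEq ?_
      refine Filter.eventuallyEq_of_mem (hIo.mem_nhds hs) (fun t ht => ?_)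
      linear_combination hgg t ht
    have := hF.unique hF0
    linarith
  -- T ⟂ Td
  have hTd0 : ∀ s ∈ I, T s 0*Td s 0 + T s 1*Td s 1 + T s 2*Td s 2 = 0 := by
    intro s hs
    have h0 := hasDerivAt_app' (hTd s hs) 0
    have h1 := hasDerivAt_app' (hTd s hs) 1
    have h2 := hasDerivAt_app' (hTd s hs) 2
    have hF : HasDerivAt (fun t => T t 0*T t 0 + T t 1*T t 1 + T t 2*T t 2)
        (Td s 0*T s 0 + T s 0*Td s 0 + (Td s 1*T s 1 + T s 1*Td s 1) +
          (Td s 2*T s 2 + T s 2*Td s 2)) s := ((h0.mul h0).add (h1.mul h1)).add (h2.mul h2)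
    have hF0 : HasDerivAt (fun t => T t 0*T t 0 + T t 1*T t 1 + T t 2*T t 2) 0 s := by
      refine (hasDerivAt_const s (1:ℝ)).congr_of_eventuallyEq ?_
      refine Filter.eventuallyEq_of_mem (hIo.mem_nhds hs) (fun t ht => ?_)
      linear_combination hTT t ht
    have := hF.unique hF0
    linarith
  -- ⟪γ, Td⟫ = -1
  have hgTd : ∀ s ∈ I, γ s 0*Td s 0 + γ s 1*Td s 1 + γ s 2*Td s 2 = -1 := by
    intro s hs
    have hg0 := hasDerivAt_app' (hγT s hs) 0
    have hg1 := hasDerivAt_app' (hγT s hs) 1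
    have hg2 := hasDerivAt_app' (hγT s hs) 2
    have ht0 := hasDerivAt_app' (hTd s hs) 0
    have ht1 := hasDerivAt_app' (hTd s hs) 1
    have ht2 := hasDerivAt_app' (hTd s hs) 2
    have hF : HasDerivAt (fun t => γ t 0*T t 0 + γ t 1*T t 1 + γ t 2*T t 2)
        (T s 0*T s 0 + γ s 0*Td s 0 + (T s 1*T s 1 + γ s 1*Td s 1) +
          (T s 2*T s 2 + γ s 2*Td s 2)) s := ((hg0.mul ht0).add (hg1.mul ht1)).add (hg2.mul ht2)
    have hF0 : HasDerivAt (fun t => γ t 0*T t 0 + γ t 1*T t 1 + γ t 2*T t 2) 0 s := by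
      refine (hasDerivAt_const s (0:ℝ)).congr_of_eventuallyEq ?_
      refine Filter.eventuallyEq_of_mem (hIo.mem_nhds hs) (fun t ht => hgT0 t ht)
    have h := hF.unique hF0
    have := hTT s hs
    nlinarith [hTT s hs, h]
  -- Y components
  have hY0 : ∀ s ∈ I, Y s 0 = γ s 1 * T s 2 - γ s 2 * T s 1 := fun s hs => by rw [hY s hs]; rfl
  have hY1 : ∀ s ∈ I, Y s 1 = γ s 2 * T s 0 - γ s 0 * T s 2 := fun s hs => by rw [hY s hs]; rfl
  have hY2 : ∀ s ∈ I, Y s 2 = γ s 0 * T s 1 - γ s 1 * T s 0 := fun s hs => by rw [hY s hs]; rfl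
  have hκg' : ∀ s ∈ I, κg s = γ s 0*(T s 1*Td s 2 - T s 2*Td s 1)
      - γ s 1*(T s 0*Td s 2 - T s 2*Td s 0) + γ s 2*(T s 0*Td s 1 - T s 1*Td s 0) :=
    fun s hs => hκg s hs
  -- claim A pointwise
  have hclA : ∀ s ∈ I, γ s 1*Td s 2 - γ s 2*Td s 1 = -(κg s)*T s 0 ∧
      γ s 2*Td s 0 - γ s 0*Td s 2 = -(κg s)*T s 1 ∧
      γ s 0*Td s 1 - γ s 1*Td s 0 = -(κg s)*T s 2 := by
    intro s hs
    exact claimA _ _ _ _ _ _ _ _ _ _ (hTT s hs) (hgT0 s hs) (hTd0 s hs) (hκg' s hs)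
  -- claim B pointwise, vector form
  have hclB : ∀ s ∈ I, Td s = -γ s + κg s • Y s := by
    intro s hs
    obtain ⟨hA0, hA1, hA2⟩ := hclA s hs
    obtain ⟨hb0, hb1, hb2⟩ :=
      claimB _ _ _ _ _ _ _ _ _ _ (hgg s hs) (hgTd s hs) hA0 hA1 hA2
    ext i
    fin_cases i
    · simpa [hY0 s hs] using hb0
    · simpa [hY1 s hs] using hb1
    · simpa [hY2 s hs] using hb2
  -- derivative of Y
  have hYdv : ∀ s ∈ I, HasDerivAt Y ((-κg s) • T s) s := by
    intro s hs
    apply hasDerivAt_comps'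
    intro i
    have hg0 := hasDerivAt_app' (hγT s hs) 0
    have hg1 := hasDerivAt_app' (hγT s hs) 1
    have hg2 := hasDerivAt_app' (hγT s hs) 2
    have ht0 := hasDerivAt_app' (hγT s hs) 0
    have hT0 := hasDerivAt_app' (hTd s hs) 0
    have hT1' := hasDerivAt_app' (hTd s hs) 1
    have hT2' := hasDerivAt_app' (hTd s hs) 2
    obtain ⟨hA0, hA1, hA2⟩ := hclA s hs
    fin_cases i
    · have hd : HasDerivAt (fun t => γ t 1 * T t 2 - γ t 2 * T t 1)
          (T s 1 * T s 2 + γ s 1 * Td s 2 - (T s 2 * T s 1 + γ s 2 * Td s 1)) s :=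
        (hg1.mul hT2').sub (hg2.mul hT1')
      have he : (fun t => Y t 0) =ᶠ[nhds s] fun t => γ t 1 * T t 2 - γ t 2 * T t 1 :=
        Filter.eventuallyEq_of_mem (hIo.mem_nhds hs) (fun t ht => hY0 t ht)
      have hh := hd.congr_of_eventuallyEq he
      show HasDerivAt (fun t => Y t 0) (-κg s * T s 0) s
      refine hh.congr_deriv ?_
      show (_ : ℝ) = _
      linear_combination hA0
    · have hd : HasDerivAt (fun t => γ t 2 * T t 0 - γ t 0 * T t 2)
          (T s 2 * T s 0 + γ s 2 * Td s 0 - (T s 0 * T s 2 + γ s 0 * Td s 2)) s :=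
        (hg2.mul hT0).sub (hg0.mul hT2')
      have he : (fun t => Y t 1) =ᶠ[nhds s] fun t => γ t 2 * T t 0 - γ t 0 * T t 2 :=
        Filter.eventuallyEq_of_mem (hIo.mem_nhds hs) (fun t ht => hY1 t ht)
      have hh := hd.congr_of_eventuallyEq he
      show HasDerivAt (fun t => Y t 1) (-κg s * T s 1) s
      refine hh.congr_deriv ?_
      show (_ : ℝ) = _
      linear_combination hA1
    · have hd : HasDerivAt (fun t => γ t 0 * T t 1 - γ t 1 * T t 0)
          (T s 0 * T s 1 + γ s 0 * Td s 1 - (T s 1 * T s 0 + γ s 1 * Td s 0)) s :=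
        (hg0.mul hT1').sub (hg1.mul hT0)
      have he : (fun t => Y t 2) =ᶠ[nhds s] fun t => γ t 0 * T t 1 - γ t 1 * T t 0 :=
        Filter.eventuallyEq_of_mem (hIo.mem_nhds hs) (fun t ht => hY2 t ht)
      have hh := hd.congr_of_eventuallyEq he
      show HasDerivAt (fun t => Y t 2) (-κg s * T s 2) s
      refine hh.congr_deriv ?_
      show (_ : ℝ) = _
      linear_combination hA2
  -- continuity of κg on I
  have hD1 : ∀ s ∈ I, deriv γ s = T s := fun s hs => (hγT s hs).deriv
  have hcont1 : ContinuousOn (deriv γ) I := hγsm.continuousOn_deriv_of_isOpen hIo (by simp)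
  have hsm1 : ContDiffOn ℝ (⊤ : ℕ∞) (deriv γ) I := hγsm.deriv_of_isOpen hIo (by simp)
  have hD2at : ∀ s ∈ I, HasDerivAt (deriv γ) (Td s) s := by
    intro s hs
    refine (hTd s hs).congr_of_eventuallyEq ?_
    exact Filter.eventuallyEq_of_mem (hIo.mem_nhds hs) (fun t ht => hD1 t ht)
  have hD2 : ∀ s ∈ I, deriv (deriv γ) s = Td s := fun s hs => (hD2at s hs).deriv
  have hcont2 : ContinuousOn (deriv (deriv γ)) I :=
    hsm1.continuousOn_deriv_of_isOpen hIo (by simp)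
  have hcg : ∀ i : Fin 3, ContinuousOn (fun s => γ s i) I := fun i =>
    (EuclideanSpace.proj i).continuous.comp_continuousOn hγsm.continuousOn
  have hcT : ∀ i : Fin 3, ContinuousOn (fun s => T s i) I := fun i =>
    ((EuclideanSpace.proj i).continuous.comp_continuousOn hcont1).congr
      (fun s hs => by rw [← hD1 s hs]; rfl)
  have hcTd : ∀ i : Fin 3, ContinuousOn (fun s => Td s i) I := fun i =>
    ((EuclideanSpace.proj i).continuous.comp_continuousOn hcont2).congr
      (fun s hs => by rw [← hD2 s hs]; rfl)
  have hκcont : ContinuousOn κg I := by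
    refine ContinuousOn.congr ?_ (fun s hs => hκg' s hs)
    exact (((hcg 0).mul (((hcT 1).mul (hcTd 2)).sub ((hcT 2).mul (hcTd 1)))).sub
      ((hcg 1).mul (((hcT 0).mul (hcTd 2)).sub ((hcT 2).mul (hcTd 0))))).add
      ((hcg 2).mul (((hcT 0).mul (hcTd 1)).sub ((hcT 1).mul (hcTd 0))))
  -- the sign
  set f : ℝ → ℝ := fun s => δ * (1 - c * κg s) with hfdef
  have hfc : ContinuousOn f I :=
    continuousOn_const.mul (continuousOn_const.sub (continuousOn_const.mul hκcont))
  have hfne : ∀ s ∈ I, f s ≠ 0 := by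
    intro s hs
    refine mul_ne_zero hδ0 ?_
    rw [sub_ne_zero]
    intro h
    exact hreg s hs (by rw [mul_comm]; exact h.symm)
  set s₀ : ℝ := (a + b) / 2 with hs₀def
  have hs₀ : s₀ ∈ I := ⟨by simp only [hs₀def]; linarith, by simp only [hs₀def]; linarith⟩
  set E : ℝ := if 0 < f s₀ then 1 else -1 with hEdef
  have hE2 : E * E = 1 := by
    rw [hEdef]; split <;> norm_num
  have hEabs : |E| = 1 := by
    rw [hEdef]; split <;> norm_num
  have hE0 : E ≠ 0 := by
    rw [hEdef]; split <;> norm_num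
  have hEf : ∀ s ∈ I, 0 < E * f s := by
    intro s hs
    have hsub : Set.uIcc s s₀ ⊆ I := Set.ordConnected_Ioo.uIcc_subset hs hs₀
    by_cases h0 : 0 < f s₀
    · rw [hEdef, if_pos h0, one_mul]
      rcases (hfne s hs).lt_or_gt with h | h
      · exfalso
        obtain ⟨t, ht, h0t⟩ := intermediate_value_uIcc (hfc.mono hsub)
          (Set.mem_uIcc.2 (Or.inl ⟨le_of_lt h, le_of_lt h0⟩))
        exact hfne t (hsub ht) h0t
      · exact h
    · rw [hEdef, if_neg h0, neg_one_mul, neg_pos]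
      have h0' : f s₀ < 0 := (hfne s₀ hs₀).lt_or_gt.resolve_right h0
      rcases (hfne s hs).lt_or_gt with h | h
      · exact h
      · exfalso
        obtain ⟨t, ht, h0t⟩ := intermediate_value_uIcc (hfc.mono hsub)
          (Set.mem_uIcc.2 (Or.inr ⟨le_of_lt h0', le_of_lt h⟩))
        exact hfne t (hsub ht) h0t
  -- the frame
  refine ⟨fun s => δ • (γ s + c • Y s), fun s => E • T s, fun s => (E*δ) • (Y s - c • γ s),
    fun _ => σ0, fun s => E*δ*(1 - c*κg s)/σ0, fun s => δ*(c + κg s)/σ0, ?_, E*A, A*c,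
    mul_ne_zero hE0 hA, ?_⟩
  · intro s hs
    refine ⟨?_, hσ0, ?_, ?_, ?_, ?_, ?_, ?_, ?_, ?_⟩
    -- 1: γt' = σ Tt
    · have hv : σ0 • (δ • (γ s + c • Y s)) = A • γ s + (A * c) • Y s := by
        rw [smul_smul, smul_add, smul_smul, mul_comm σ0 δ, hδσ]
      rw [hv]
      exact hγt s hs
    -- 3: ‖Tt‖ = 1
    · apply norm_eq_one3
      simp only [PiLp.smul_apply, PiLp.add_apply, smul_eq_mul]
      rw [hY0 s hs, hY1 s hs, hY2 s hs]
      linear_combination (δ^2)*(hgg s hs) +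
        (δ^2*c^2)*(((T s 0)^2+(T s 1)^2+(T s 2)^2)*(hgg s hs) + (hTT s hs) +
          (-(γ s 0*T s 0+γ s 1*T s 1+γ s 2*T s 2))*(hgT0 s hs)) + hδc
    -- 4: Tt' = σκ N
    · apply hasDerivAt_comps'
      intro i
      have hgi := hasDerivAt_app' (hγT s hs) i
      have hYi := hasDerivAt_app' (hYdv s hs) i
      have hd : HasDerivAt (fun t => δ * (γ t i + c * Y t i))
          (δ * (T s i + c * ((-κg s) • T s) i)) s :=
        ((hgi.add (hYi.const_mul c)).const_mul δ)
      have heq : (fun t => (δ • (γ t + c • Y t)) i) = fun t => δ * (γ t i + c * Y t i) := by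
        funext t; simp [smul_eq_mul, mul_add]
      rw [heq]
      convert hd using 1
      simp only [PiLp.smul_apply, smul_eq_mul]
      exact (val_Tt E δ σ0 c (κg s) (T s i) hE2 hσne).symm
    -- 5: 0 < κt
    · refine div_pos ?_ hσ0
      have h1 : (0:ℝ) < E * (δ * (1 - c * κg s)) := hEf s hs
      rw [mul_assoc]; exact h1
    -- 6: ‖Nt‖ = 1
    · rw [norm_smul, Real.norm_eq_abs, hEabs, hT1 s hs, one_mul]
    -- 7: ⟪Tt, Nt⟫ = 0
    · rw [inner3]
      simp only [PiLp.smul_apply, PiLp.add_apply, smul_eq_mul]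
      rw [hY0 s hs, hY1 s hs, hY2 s hs]
      linear_combination (δ*E)*(hgT0 s hs)
    -- 8: Bt = Tt × Nt
    · ext i
      fin_cases i
      · show (E*δ) * (Y s 0 - c * γ s 0) =
            δ * (γ s 1 + c * Y s 1) * (E * T s 2) - δ * (γ s 2 + c * Y s 2) * (E * T s 1)
        rw [hY0 s hs, hY1 s hs, hY2 s hs]
        linear_combination (-(E*δ*c*T s 0))*(hgT0 s hs) + (E*δ*c*γ s 0)*(hTT s hs)
      · show (E*δ) * (Y s 1 - c * γ s 1) =
            δ * (γ s 2 + c * Y s 2) * (E * T s 0) - δ * (γ s 0 + c * Y s 0) * (E * T s 2)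
        rw [hY0 s hs, hY1 s hs, hY2 s hs]
        linear_combination (-(E*δ*c*T s 1))*(hgT0 s hs) + (E*δ*c*γ s 1)*(hTT s hs)
      · show (E*δ) * (Y s 2 - c * γ s 2) =
            δ * (γ s 0 + c * Y s 0) * (E * T s 1) - δ * (γ s 1 + c * Y s 1) * (E * T s 0)
        rw [hY0 s hs, hY1 s hs, hY2 s hs]
        linear_combination (-(E*δ*c*T s 2))*(hgT0 s hs) + (E*δ*c*γ s 2)*(hTT s hs)
    -- 9: Nt'
    · apply hasDerivAt_comps'
      intro i
      have hTdi := hasDerivAt_app' (hTd s hs) i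
      have hd : HasDerivAt (fun t => E * T t i) (E * Td s i) s := hTdi.const_mul E
      have heq : (fun t => (E • T t) i) = fun t => E * T t i := by
        funext t; simp [smul_eq_mul]
      rw [heq]
      convert hd using 1
      simp only [PiLp.smul_apply, PiLp.add_apply, PiLp.sub_apply, smul_eq_mul]
      have hBd : Td s i = -γ s i + κg s * Y s i := by
        rw [hclB s hs]; simp [smul_eq_mul]
      rw [hBd]
      linear_combination (val_Nt E δ σ0 c (κg s) (γ s i) (Y s i) hσne hδc).symm
    -- 10: Bt'
    · apply hasDerivAt_comps'
      intro i
      have hgi := hasDerivAt_app' (hγT s hs) i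
      have hYi := hasDerivAt_app' (hYdv s hs) i
      have hd : HasDerivAt (fun t => (E*δ) * (Y t i - c * γ t i))
          ((E*δ) * (((-κg s) • T s) i - c * T s i)) s :=
        ((hYi.sub (hgi.const_mul c)).const_mul (E*δ))
      have heq : (fun t => ((E*δ) • (Y t - c • γ t)) i) = fun t => (E*δ) * (Y t i - c * γ t i) := by
        funext t; simp [smul_eq_mul]
      rw [heq]
      convert hd using 1
      simp only [PiLp.smul_apply, smul_eq_mul]
      exact (val_Bt E δ σ0 c (κg s) (T s i) hσne).symm
  · intro s hs
    exact val_bert E δ σ0 A c (κg s) hE2 hδσ hδc hσne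
end
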